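/- arXiv:1803.09322 — 3 statements merged into one kernel-verified Lean document; each statement's English description precedes it below -/
import Mathlib

section
/- Let A_1,…,A_n be finite multisets of elements of 𝒜, with A_i = {a_1^i,…,a_{k_i}^i}, and let A = A_1 ∪ ⋯ ∪ A_n be their indexed multiset union. Then (a_1^1 ∗ ⋯ ∗ a_{k_1}^1) · (a_1^2 ∗ ⋯ ∗ a_{k_2}^2) · ⋯ · (a_1^n ∗ ⋯ ∗ a_{k_n}^n) = Σ_{F ∈ F̄(A)} (−1)^{w_F} κ_F, where the sum runs over all mixing reduced forests F with leaves in A (mixing with respect to the division A = A_1 ∪ ⋯ ∪ A_n). -/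
open Finset

/-! ### Algebras with two multiplications -/

/-- An algebra with two multiplications: an `R`-module `A` equipped with two `R`-bilinear,
commutative, associative multiplications `dot` and `star` sharing a common unit `one`. -/
structure TwoMulAlg (R : Type*) (A : Type*) [CommRing R] [AddCommGroup A] [Module R A] where
  dot : A → A → A
  star : A → A → A
  one : A
  dot_comm : ∀ x y, dot x y = dot y x
  dot_assoc : ∀ x y z, dot (dot x y) z = dot x (dot y z)
  star_comm : ∀ x y, star x y = star y x
  star_assoc : ∀ x y z, star (star x y) z = star x (star y z)
  dot_one : ∀ x, dot x one = x
  star_one : ∀ x, star x one = x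
  dot_add : ∀ x y z, dot (x + y) z = dot x z + dot y z
  star_add : ∀ x y z, star (x + y) z = star x z + star y z
  dot_smul : ∀ (r : R) (x y : A), dot (r • x) y = r • dot x y
  star_smul : ∀ (r : R) (x y : A), star (r • x) y = r • star x y

namespace TwoMulAlg

variable {R : Type*} {A : Type*} [CommRing R] [AddCommGroup A] [Module R A]

/-- The `·`-product of the values of `f` over a finite set `s`. -/
def dotProd (T : TwoMulAlg R A) {ι : Type*} (s : Finset ι) (f : ι → A) : A :=
  @Finset.fold ι A T.dot ⟨T.dot_comm⟩ ⟨T.dot_assoc⟩ T.one f s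

/-- The `∗`-product of the values of `f` over a finite set `s`. -/
def starProd (T : TwoMulAlg R A) {ι : Type*} (s : Finset ι) (f : ι → A) : A :=
  @Finset.fold ι A T.star ⟨T.star_comm⟩ ⟨T.star_assoc⟩ T.one f s

/-- The same algebra with the roles of the two multiplications exchanged. -/
def swap (T : TwoMulAlg R A) : TwoMulAlg R A :=
  ⟨T.star, T.dot, T.one, T.star_comm, T.star_assoc, T.dot_comm, T.dot_assoc,
    T.star_one, T.dot_one, T.star_add, T.dot_add, T.star_smul, T.dot_smul⟩

end TwoMulAlg

/-- `k : Multiset A → A` is *the* family of cumulants of the identity map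
`(A, ·) → (A, ∗)`: it is symmetric (being defined on multisets), satisfies `κ(a) = a`,
and the moment–cumulant formula: for every finite family `a : Fin m → A`, the `∗`-product
of the family equals the sum, over all set partitions `ν` of `{1, …, m}`, of the
`·`-product over the blocks `b` of `ν` of the cumulants of the subfamilies. -/
def IsCumulant {R : Type*} {A : Type*} [CommRing R] [AddCommGroup A] [Module R A]
    (T : TwoMulAlg R A) (k : Multiset A → A) : Prop :=
  (∀ a : A, k {a} = a) ∧
  ∀ (m : ℕ) (a : Fin m → A),
    T.starProd Finset.univ a =
      ∑ᶠ ν : Finpartition (Finset.univ : Finset (Fin m)),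
        T.dotProd ν.parts fun b => k (Multiset.map a b.val)

section Forests

variable {ι : Type*} [DecidableEq ι]

/-!  A reduced forest with set of leaves a finite (ground) set `b` is encoded by the family
`F` of the sets of leaves lying below its internal vertices: this family is *laminar*
(any two members are nested or disjoint) and each member has at least two elements
(this corresponds to every internal vertex having at least two children).  The vertices of
the forest are identified with the corresponding sets of leaves: the singletons `{x}`, `x ∈ b`,
are the leaves and the members of `F` are the internal vertices. -/

/-- The vertices of the reduced forest `F` on the ground set `b`, viewed as subsets of `b`:
the singletons (leaves) together with the members of `F` (internal vertices). -/
def forestVerts (b : Finset ι) (F : Finset (Finset ι)) : Finset (Finset ι) :=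
  F ∪ b.image fun x => ({x} : Finset ι)

/-- `F` encodes a reduced forest with leaves (bijectively labelled by) `b`:
each internal vertex covers at least two leaves, i.e. has at least two children. -/
def IsReducedForest (b : Finset ι) (F : Finset (Finset ι)) : Prop :=
  (∀ s ∈ F, s ⊆ b ∧ 2 ≤ s.card) ∧
    ∀ s ∈ F, ∀ t ∈ F, s ⊆ t ∨ t ⊆ s ∨ Disjoint s t

/-- `t` is a child of `s` in the forest `F` on ground set `b`. -/
def IsChildV (b : Finset ι) (F : Finset (Finset ι)) (t s : Finset ι) : Prop :=
  t ∈ forestVerts b F ∧ s ∈ forestVerts b F ∧ t ⊂ s ∧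
    ∀ u ∈ forestVerts b F, ¬(t ⊂ u ∧ u ⊂ s)

/-- The children of the vertex `s` in the forest `F` on ground set `b`. -/
def childrenF (b : Finset ι) (F : Finset (Finset ι)) (s : Finset ι) : Finset (Finset ι) :=
  (forestVerts b F).filter fun t => t ⊂ s ∧ ∀ u ∈ forestVerts b F, ¬(t ⊂ u ∧ u ⊂ s)

/-- The roots (maximal vertices) of the forest `F` on ground set `b`. -/
def rootsF (b : Finset ι) (F : Finset (Finset ι)) : Finset (Finset ι) :=
  (forestVerts b F).filter fun s => ∀ u ∈ forestVerts b F, ¬s ⊂ u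

/-- The forest `F` consists of a single tree. -/
def IsTreeF (b : Finset ι) (F : Finset (Finset ι)) : Prop :=
  b ∈ forestVerts b F

/-- The number of internal vertices of the forest `F`. -/
def wForest (F : Finset (Finset ι)) : ℕ := F.card

/-- The height of the forest `F` on ground set `b` (the maximal distance from a root
to a leaf below it). -/
def forestHeight (b : Finset ι) (F : Finset (Finset ι)) : ℕ :=
  b.sup fun x => (F.filter fun s => x ∈ s).card

variable {A : Type*}

/-- The cumulant `κ_v` attached to a vertex `v` of the forest `F` (with leaves `b`
labelled by `a`): it is `a x` on a leaf `{x}` and `k` applied to the cumulants of the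
children on an internal vertex. -/
noncomputable def kappaVert (k : Multiset A → A) (b : Finset ι) (F : Finset (Finset ι))
    (a : ι → A) : Finset ι → A := fun s =>
  if h : s.card = 1 then a (Finset.card_eq_one.mp h).choose
  else k (Multiset.map (fun t => kappaVert k b F a t.1) (childrenF b F s).attach.val)
termination_by s => s.card
decreasing_by
  have ht := (Finset.mem_filter.mp t.2).2.1
  exact Finset.card_lt_card ht

end Forests

/-- The cumulant `κ_F` of the forest `F`: the `∗`-product of the cumulants of its roots. -/
noncomputable def kappaForest {R : Type*} {A : Type*} [CommRing R] [AddCommGroup A]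
    [Module R A] {ι : Type*} [DecidableEq ι] (T : TwoMulAlg R A) (k : Multiset A → A)
    (b : Finset ι) (F : Finset (Finset ι)) (a : ι → A) : A :=
  T.starProd (rootsF b F) (kappaVert k b F a)

section Mixing

variable {ι : Type*} [DecidableEq ι] {n : ℕ}

/-- The forest `F` is *mixing* for the division of its leaves given by `part`:
every internal vertex all of whose children are leaves has two children (leaves)
belonging to distinct multisets. -/
def IsMixingForest (b : Finset ι) (F : Finset (Finset ι)) (part : ι → Fin n) : Prop :=
  ∀ s ∈ F, (∀ t ∈ F, ¬t ⊂ s) → ∃ x ∈ s, ∃ y ∈ s, part x ≠ part y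

/-- `lam` determines a *row partition* `{lam, b \ lam}` of the ground set `b` for the
division given by `part`: both parts are nonempty and every fiber of `part` (i.e. every
multiset `A_i`) is contained in one of the two parts. -/
def IsRowSplit (b : Finset ι) (part : ι → Fin n) (lam : Finset ι) : Prop :=
  lam ⊆ b ∧ lam.Nonempty ∧ (b \ lam).Nonempty ∧
    ∀ i : Fin n, (b.filter fun x => part x = i) ⊆ lam ∨
      (b.filter fun x => part x = i) ⊆ b \ lam

/-- A set partition `ν` of `b` is *mixing* if some block is contained in no single
multiset `A_i`. -/
def IsMixingPartition (b : Finset ι) (ν : Finpartition b) (part : ι → Fin n) : Prop :=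
  ∃ c ∈ ν.parts, ∀ i : Fin n, ¬c ⊆ b.filter fun x => part x = i

/-- A set partition `ν` of `b` is *strongly mixing* if there is no row partition such that
every block of `ν` is contained in one of the two rows. -/
def IsStronglyMixingPartition (b : Finset ι) (ν : Finpartition b) (part : ι → Fin n) : Prop :=
  ¬∃ lam : Finset ι, IsRowSplit b part lam ∧
    ∀ c ∈ ν.parts, c ⊆ lam ∨ c ⊆ b \ lam

/-- A forest is *strongly mixing* if it is mixing and the partition of the leaves into the
leaf sets of its trees (i.e. of its roots) is strongly mixing. -/
def IsStronglyMixingForest (b : Finset ι) (F : Finset (Finset ι)) (part : ι → Fin n) : Prop :=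
  IsMixingForest b F part ∧
    ¬∃ lam : Finset ι, IsRowSplit b part lam ∧
      ∀ s ∈ rootsF b F, s ⊆ lam ∨ s ⊆ b \ lam

/-- `c` is a gap-free vertex colouring of length `r` of the forest `F` on ground set `b`:
each vertex gets a colour in `{0, …, r}`, each colour is used, each leaf is coloured `0`
and the colours strictly increase on any path from a leaf to a root.  (As a normalisation,
non-vertices get the colour `0`.) -/
def IsGapFreeColouring (b : Finset ι) (F : Finset (Finset ι)) (c : Finset ι → ℕ) (r : ℕ) :
    Prop :=
  (∀ s ∈ forestVerts b F, c s ≤ r) ∧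
  (∀ j ≤ r, ∃ s ∈ forestVerts b F, c s = j) ∧
  (∀ x ∈ b, c {x} = 0) ∧
  (∀ t s : Finset ι, IsChildV b F t s → c t < c s) ∧
  (∀ s : Finset ι, s ∉ forestVerts b F → c s = 0)

/-- A colouring is *weakly mixing* if either the colour `1` is not used at all, or some
vertex of colour `1` has two children which are leaves belonging to distinct multisets. -/
def IsWeaklyMixing (b : Finset ι) (F : Finset (Finset ι)) (part : ι → Fin n)
    (c : Finset ι → ℕ) : Prop :=
  (∀ s ∈ forestVerts b F, c s ≠ 1) ∨
    ∃ s ∈ forestVerts b F, c s = 1 ∧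
      ∃ x y : ι, IsChildV b F {x} s ∧ IsChildV b F {y} s ∧ part x ≠ part y

/-- The set `C_F` of gap-free, weakly mixing colourings of the forest `F` (a colouring is
recorded as a pair: the colour function together with its length). -/
def ColouringSet (b : Finset ι) (F : Finset (Finset ι)) (part : ι → Fin n) :
    Set ((Finset ι → ℕ) × ℕ) :=
  {p | IsGapFreeColouring b F p.1 p.2 ∧ IsWeaklyMixing b F part p.1}

/-- The signed count `Σ_{c ∈ C_F} (-1)^{|c|}` of the gap-free weakly mixing colourings
of the forest `F`. -/
noncomputable def colourSum (b : Finset ι) (F : Finset (Finset ι)) (part : ι → Fin n) : ℤ :=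
  ∑ᶠ p ∈ ColouringSet b F part, (-1 : ℤ) ^ p.2

/-- The projection of a colouring `c` onto the subtree of `F` with ground set `b`:
restrict `c` to the vertices and relabel the used colours order-preservingly by
`0, 1, 2, …`. -/
def projColouring (b : Finset ι) (F : Finset (Finset ι)) (c : Finset ι → ℕ) :
    (Finset ι → ℕ) × ℕ :=
  ((fun s => if s ∈ forestVerts b F then
      (((forestVerts b F).image c).sort (· ≤ ·)).idxOf (c s) else 0),
    ((forestVerts b F).image c).card - 1)

end Mixing

section UpSeq

variable {ι : Type*} [DecidableEq ι] {b : Finset ι} {A : Type*} {n : ℕ}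

/-- The value attached to a block `c` of the top partition of an upward sequence of
partitions; the list records the earlier (finer) partitions, from the latest to the
earliest.  On the empty list (a block of the first partition) it is the cumulant of the
labels of the elements of the block; on `p :: rest` it is the cumulant of the values of
the blocks of `p` contained in `c`. -/
def levelVal (k : Multiset A → A) (a : ι → A) : List (Finpartition b) → Finset ι → A
  | [], c => k (Multiset.map a c.val)
  | p :: rest, c => k (Multiset.map (levelVal k a rest) (p.parts.filter fun d => d ⊆ c).val)

/-- The cumulant `κ_ω` of a (nonempty) upward sequence of partitions
`ω = [ν¹, …, νʳ]`: the `∗`-product over the blocks of `νʳ` of the iterated cumulants. -/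
def kappaUpSeq {R : Type*} [CommRing R] [AddCommGroup A] [Module R A] (T : TwoMulAlg R A)
    (k : Multiset A → A) (a : ι → A) (ω : List (Finpartition b)) : A :=
  match ω.reverse with
  | [] => T.one
  | p :: rest => T.starProd p.parts (levelVal k a rest)

/-- The set `P↗(A)` of nested upward sequences of partitions starting from a mixing
partition.  An upward sequence is encoded by the induced chain `ν¹ ≤ ν² ≤ ⋯` of
partitions of the ground set `b` (`≤` being the refinement order); nestedness means the
chain is strictly increasing. -/
def UpSeqSet (b : Finset ι) (part : ι → Fin n) : Set (List (Finpartition b)) :=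
  {ω | ω ≠ [] ∧ List.Chain' (· < ·) ω ∧ ∀ p ∈ ω.head?, IsMixingPartition b p part}

end UpSeq

section RingStuff

variable {R : Type*} {A : Type*} [CommRing R] [AddCommGroup A] [Module R A]

namespace TwoMulAlg

/-- The commutative ring structure on `A` given by the `dot` multiplication. -/
def dotRing (T : TwoMulAlg R A) : CommRing A :=
  { (inferInstance : AddCommGroup A) with
    mul := T.dot
    one := T.one
    mul_assoc := T.dot_assoc
    mul_comm := T.dot_comm
    one_mul := fun x => by show T.dot T.one x = x; rw [T.dot_comm]; exact T.dot_one x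
    mul_one := T.dot_one
    left_distrib := fun x y z => by
      show T.dot x (y+z) = T.dot x y + T.dot x z
      rw [T.dot_comm x (y+z), T.dot_add, T.dot_comm y x, T.dot_comm z x]
    right_distrib := T.dot_add
    zero_mul := fun x => by
      show T.dot 0 x = 0
      have h := T.dot_add 0 0 x
      rw [add_zero] at h
      simpa using h
    mul_zero := fun x => by
      show T.dot x 0 = 0
      have h := T.dot_add 0 0 x
      rw [add_zero] at h
      rw [T.dot_comm]
      simpa using h }

theorem dotProd_eq_prod (T : TwoMulAlg R A) {ι : Type*} (s : Finset ι) (f : ι → A) :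
    T.dotProd s f = @Finset.prod ι A (T.dotRing).toCommMonoid s f := by
  rw [@Finset.prod_eq_fold ι A (T.dotRing).toCommMonoid]
  rfl

theorem starProd_eq_prod (T : TwoMulAlg R A) {ι : Type*} (s : Finset ι) (f : ι → A) :
    T.starProd s f = @Finset.prod ι A (T.swap.dotRing).toCommMonoid s f := by
  rw [@Finset.prod_eq_fold ι A (T.swap.dotRing).toCommMonoid]
  rfl

theorem dotProd_congr (T : TwoMulAlg R A) {ι : Type*} {s : Finset ι} {f g : ι → A}
    (h : ∀ i ∈ s, f i = g i) : T.dotProd s f = T.dotProd s g := by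
  rw [T.dotProd_eq_prod, T.dotProd_eq_prod]
  letI := T.dotRing
  exact Finset.prod_congr rfl h

end TwoMulAlg

end RingStuff

section PartsOfSection

variable {κ : Type*} [DecidableEq κ]

/-- Set partitions of `s`, encoded as finsets of blocks. -/
def partsOf (s : Finset κ) : Finset (Finset (Finset κ)) :=
  s.powerset.powerset.filter fun P => P.SupIndep id ∧ P.sup id = s ∧ ∅ ∉ P

lemma mem_partsOf {s : Finset κ} {P : Finset (Finset κ)} :
    P ∈ partsOf s ↔ P.SupIndep id ∧ P.sup id = s ∧ ∅ ∉ P := by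
  constructor
  · intro h; exact (Finset.mem_filter.mp h).2
  · intro h
    refine Finset.mem_filter.mpr ⟨?_, h⟩
    rw [Finset.mem_powerset]
    intro c hc
    rw [Finset.mem_powerset]
    have := Finset.le_sup (f := id) hc
    rw [h.2.1] at this
    exact this

lemma partsOf_block_subset {s : Finset κ} {P : Finset (Finset κ)} {C : Finset κ}
    (hP : P ∈ partsOf s) (hC : C ∈ P) : C ⊆ s := by
  have := Finset.le_sup (f := id) hC
  rw [(mem_partsOf.mp hP).2.1] at this
  exact this

lemma partsOf_nonempty_block {s : Finset κ} {P : Finset (Finset κ)} {C : Finset κ}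
    (hP : P ∈ partsOf s) (hC : C ∈ P) : C.Nonempty := by
  rcases Finset.eq_empty_or_nonempty C with h | h
  · exact absurd (h ▸ hC) (mem_partsOf.mp hP).2.2
  · exact h

lemma partsOf_disjoint {s : Finset κ} {P : Finset (Finset κ)} {C D : Finset κ}
    (hP : P ∈ partsOf s) (hC : C ∈ P) (hD : D ∈ P) (hne : C ≠ D) : Disjoint C D := by
  have := (mem_partsOf.mp hP).1
  rw [Finset.supIndep_iff_pairwiseDisjoint] at this
  exact this hC hD hne

lemma partsOf_eq_of_mem {s : Finset κ} {P : Finset (Finset κ)} {C D : Finset κ} {x : κ}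
    (hP : P ∈ partsOf s) (hC : C ∈ P) (hD : D ∈ P) (hxC : x ∈ C) (hxD : x ∈ D) : C = D := by
  by_contra hne
  exact (Finset.disjoint_left.mp (partsOf_disjoint hP hC hD hne) hxC) hxD

lemma partsOf_cover {s : Finset κ} {P : Finset (Finset κ)} {x : κ}
    (hP : P ∈ partsOf s) (hx : x ∈ s) : ∃ C ∈ P, x ∈ C := by
  have h := (mem_partsOf.mp hP).2.1
  rw [← h, Finset.sup_eq_biUnion] at hx
  simpa using hx

end PartsOfSection

section ExpandSection

variable {R : Type*} {A : Type*} [CommRing R] [AddCommGroup A] [Module R A]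

/-- The generalized moment-cumulant formula over an arbitrary finite index set. -/
theorem TwoMulAlg.expand (T : TwoMulAlg R A) {k : Multiset A → A} (hk : IsCumulant T k)
    {κ : Type*} [DecidableEq κ] (s : Finset κ) (f : κ → A) :
    T.starProd s f = ∑ P ∈ partsOf s, T.dotProd P fun c => k (Multiset.map f c.val) := by
  classical
  set m := s.card with hm
  set e : Fin m ≃ {x // x ∈ s} := s.equivFin.symm with he
  set emb : Fin m ↪ κ := ⟨fun j => (e j).1, by
    intro j₁ j₂ h; exact e.injective (Subtype.ext h)⟩ with hemb
  have hrange : Finset.univ.map emb = s := by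
    ext x
    simp only [Finset.mem_map, Finset.mem_univ, true_and]
    constructor
    · rintro ⟨j, rfl⟩; exact (e j).2
    · intro hx; exact ⟨e.symm ⟨x, hx⟩, congrArg Subtype.val (e.apply_symm_apply ⟨x, hx⟩)⟩
  have hL : T.starProd s f = T.starProd (Finset.univ : Finset (Fin m)) (fun j => f (emb j)) := by
    rw [T.starProd_eq_prod, T.starProd_eq_prod, ← hrange]
    letI := T.swap.dotRing
    exact Finset.prod_map Finset.univ emb f
  rw [hL, hk.2 m (fun j => f (emb j)), finsum_eq_sum_of_fintype]
  refine Finset.sum_bij (i := fun ν _ => ν.parts.image (fun c => c.map emb)) ?_ ?_ ?_ ?_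
  · -- maps into partsOf s
    intro ν _
    rw [mem_partsOf]
    refine ⟨?_, ?_, ?_⟩
    · rw [Finset.supIndep_iff_pairwiseDisjoint]
      rintro c₁ hc₁ c₂ hc₂ hne
      simp only [Finset.coe_image, Set.mem_image, Finset.mem_coe] at hc₁ hc₂
      obtain ⟨d₁, hd₁, rfl⟩ := hc₁
      obtain ⟨d₂, hd₂, rfl⟩ := hc₂
      have hdne : d₁ ≠ d₂ := by rintro rfl; exact hne rfl
      have := ν.disjoint hd₁ hd₂ hdne
      simp only [Function.onFun, id] at this ⊢
      rwa [Finset.disjoint_map]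
    · ext x
      rw [Finset.mem_sup]
      constructor
      · rintro ⟨c, hc, hx⟩
        simp only [Finset.mem_image] at hc
        obtain ⟨d, _, rfl⟩ := hc
        simp only [id, Finset.mem_map] at hx
        obtain ⟨j, _, rfl⟩ := hx
        rw [← hrange]
        exact Finset.mem_map_of_mem emb (Finset.mem_univ j)
      · intro hx
        rw [← hrange] at hx
        simp only [Finset.mem_map] at hx
        obtain ⟨j, _, rfl⟩ := hx
        have hj : j ∈ ν.parts.sup id := by rw [ν.sup_parts]; exact Finset.mem_univ j
        rw [Finset.mem_sup] at hj
        obtain ⟨d, hd, hjd⟩ := hj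
        exact ⟨d.map emb, Finset.mem_image_of_mem _ hd,
          Finset.mem_map_of_mem emb hjd⟩
    · intro hmem
      simp only [Finset.mem_image] at hmem
      obtain ⟨d, hd, hde⟩ := hmem
      rw [Finset.map_eq_empty] at hde
      exact ν.bot_notMem (by rw [Finset.bot_eq_empty]; exact hde ▸ hd)
  · -- injectivity
    intro ν₁ _ ν₂ _ h
    have : ν₁.parts = ν₂.parts :=
      Finset.image_injective (Finset.map_injective emb) h
    exact Finpartition.ext this
  · -- surjectivity
    intro Q hQ
    have hQ' := mem_partsOf.mp hQ
    have key : ∀ c ∈ Q, (Finset.univ.filter (fun j => emb j ∈ c)).map emb = c := by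
      intro c hc
      ext x
      simp only [Finset.mem_map, Finset.mem_filter, Finset.mem_univ, true_and]
      constructor
      · rintro ⟨j, hj, rfl⟩; exact hj
      · intro hx
        have hxs : x ∈ s := partsOf_block_subset hQ hc hx
        rw [← hrange] at hxs
        simp only [Finset.mem_map] at hxs
        obtain ⟨j, _, rfl⟩ := hxs
        exact ⟨j, hx, rfl⟩
    refine ⟨⟨Q.image (fun c => Finset.univ.filter (fun j => emb j ∈ c)), ?_, ?_, ?_⟩,
      Finset.mem_univ _, ?_⟩
    · rw [Finset.supIndep_iff_pairwiseDisjoint]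
      rintro b₁ hb₁ b₂ hb₂ hne
      simp only [Finset.coe_image, Set.mem_image, Finset.mem_coe] at hb₁ hb₂
      obtain ⟨c₁, hc₁, rfl⟩ := hb₁
      obtain ⟨c₂, hc₂, rfl⟩ := hb₂
      simp only [Function.onFun, id]
      rw [Finset.disjoint_left]
      intro j hj₁ hj₂
      simp only [Finset.mem_filter] at hj₁ hj₂
      exact hne (by rw [partsOf_eq_of_mem hQ hc₁ hc₂ hj₁.2 hj₂.2])
    · ext j
      simp only [Finset.mem_univ, iff_true]
      rw [Finset.mem_sup]
      have hjs : emb j ∈ s := by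
        rw [← hrange]; exact Finset.mem_map_of_mem emb (Finset.mem_univ j)
      obtain ⟨C, hC, hjC⟩ := partsOf_cover hQ hjs
      exact ⟨Finset.univ.filter (fun j' => emb j' ∈ C), Finset.mem_image_of_mem _ hC,
        by simp [hjC]⟩
    · intro hmem
      simp only [Finset.bot_eq_empty, Finset.mem_image] at hmem
      obtain ⟨c, hc, hce⟩ := hmem
      obtain ⟨x, hx⟩ := partsOf_nonempty_block hQ hc
      have hxs : x ∈ s := partsOf_block_subset hQ hc hx
      rw [← hrange] at hxs
      simp only [Finset.mem_map] at hxs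
      obtain ⟨j, _, rfl⟩ := hxs
      have : j ∈ Finset.univ.filter (fun j' => emb j' ∈ c) := by simp [hx]
      rw [hce] at this
      exact absurd this (Finset.notMem_empty j)
    · show Finset.image (fun c => c.map emb)
          (Finset.image (fun c => Finset.univ.filter (fun j => emb j ∈ c)) Q) = Q
      rw [Finset.image_image]
      have : ∀ c ∈ Q, ((fun c => c.map emb) ∘ fun c => Finset.univ.filter (fun j => emb j ∈ c)) c = id c :=
        fun c hc => key c hc
      rw [Finset.image_congr this, Finset.image_id]
  · -- values
    intro ν _
    letI : CommMonoid A := (T.dotRing).toCommMonoid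
    rw [T.dotProd_eq_prod, T.dotProd_eq_prod]
    rw [Finset.prod_image (fun c _ d _ h => Finset.map_injective emb h)]
    refine Finset.prod_congr rfl fun c _ => ?_
    congr 1
    rw [Finset.map_val, Multiset.map_map]
    rfl


end ExpandSection

section ForestToolkit

variable {ι : Type*} [Fintype ι] [DecidableEq ι]

lemma mem_forestVerts {F : Finset (Finset ι)} {s : Finset ι} :
    s ∈ forestVerts (Finset.univ : Finset ι) F ↔ s ∈ F ∨ ∃ x, s = {x} := by
  simp [forestVerts, eq_comm]

lemma singleton_mem_forestVerts {F : Finset (Finset ι)} (x : ι) :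
    ({x} : Finset ι) ∈ forestVerts Finset.univ F := mem_forestVerts.mpr (Or.inr ⟨x, rfl⟩)

lemma mem_forestVerts_of_mem {F : Finset (Finset ι)} {s : Finset ι} (h : s ∈ F) :
    s ∈ forestVerts Finset.univ F := mem_forestVerts.mpr (Or.inl h)

variable {F : Finset (Finset ι)}

lemma vert_nonempty (hF : IsReducedForest Finset.univ F) {s : Finset ι}
    (hs : s ∈ forestVerts Finset.univ F) : s.Nonempty := by
  rcases mem_forestVerts.mp hs with h | ⟨x, rfl⟩
  · have := (hF.1 s h).2
    exact Finset.card_pos.mp (by omega)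
  · exact Finset.singleton_nonempty x

lemma laminar (hF : IsReducedForest Finset.univ F) {s t : Finset ι}
    (hs : s ∈ forestVerts Finset.univ F) (ht : t ∈ forestVerts Finset.univ F) :
    s ⊆ t ∨ t ⊆ s ∨ Disjoint s t := by
  rcases mem_forestVerts.mp hs with h | ⟨x, rfl⟩
  · rcases mem_forestVerts.mp ht with h' | ⟨y, rfl⟩
    · exact hF.2 s h t h'
    · by_cases hy : y ∈ s
      · exact Or.inr (Or.inl (Finset.singleton_subset_iff.mpr hy))
      · exact Or.inr (Or.inr (by simp [Finset.disjoint_right, hy]))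
  · by_cases hx : x ∈ t
    · exact Or.inl (Finset.singleton_subset_iff.mpr hx)
    · exact Or.inr (Or.inr (by simp [Finset.disjoint_left, hx]))

lemma mem_childrenF {b s t : Finset ι} :
    t ∈ childrenF b F s ↔ t ∈ forestVerts b F ∧ t ⊂ s ∧
      ∀ u ∈ forestVerts b F, ¬(t ⊂ u ∧ u ⊂ s) := by
  simp only [childrenF, Finset.mem_filter, and_assoc]

lemma child_mem_verts {b s t : Finset ι} (h : t ∈ childrenF b F s) :
    t ∈ forestVerts b F := (mem_childrenF.mp h).1

lemma child_ssubset {b s t : Finset ι} (h : t ∈ childrenF b F s) : t ⊂ s :=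
  (mem_childrenF.mp h).2.1

lemma exists_child (hF : IsReducedForest Finset.univ F) {s : Finset ι}
    (hs : s ∈ forestVerts Finset.univ F) (hcard : 2 ≤ s.card) {x : ι} (hx : x ∈ s) :
    ∃ t ∈ childrenF Finset.univ F s, x ∈ t := by
  classical
  set W := (forestVerts Finset.univ F).filter (fun t => x ∈ t ∧ t ⊂ s) with hW
  have hne : W.Nonempty := by
    refine ⟨{x}, ?_⟩
    rw [hW, Finset.mem_filter]
    refine ⟨singleton_mem_forestVerts x, Finset.mem_singleton_self x, ?_⟩
    rw [Finset.ssubset_iff_of_subset (Finset.singleton_subset_iff.mpr hx)]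
    obtain ⟨y, hy, hyx⟩ := Finset.exists_mem_ne (show 1 < s.card by omega) x
    exact ⟨y, hy, by simp [hyx]⟩
  obtain ⟨t, htW, hmax⟩ : ∃ t ∈ W, ∀ u ∈ W, ¬ t < u := by
    obtain ⟨t, ht⟩ := Finset.exists_maximal hne
    exact ⟨t, ht.1, fun u hu htu => lt_irrefl _ (htu.trans_le (ht.2 hu htu.le))⟩
  rw [hW, Finset.mem_filter] at htW
  refine ⟨t, mem_childrenF.mpr ⟨htW.1, htW.2.2, ?_⟩, htW.2.1⟩
  rintro u hu ⟨htu, hus⟩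
  exact hmax u (Finset.mem_filter.mpr ⟨hu, htu.subset htW.2.1, hus⟩) htu

lemma children_disjoint (hF : IsReducedForest Finset.univ F) {s t₁ t₂ : Finset ι}
    (h₁ : t₁ ∈ childrenF Finset.univ F s) (h₂ : t₂ ∈ childrenF Finset.univ F s)
    (hne : t₁ ≠ t₂) : Disjoint t₁ t₂ := by
  rcases laminar hF (child_mem_verts h₁) (child_mem_verts h₂) with h | h | h
  · exact absurd ⟨lt_of_le_of_ne h hne, child_ssubset h₂⟩
      ((mem_childrenF.mp h₁).2.2 t₂ (child_mem_verts h₂))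
  · exact absurd ⟨lt_of_le_of_ne h (Ne.symm hne), child_ssubset h₁⟩
      ((mem_childrenF.mp h₂).2.2 t₁ (child_mem_verts h₁))
  · exact h

lemma children_sup (hF : IsReducedForest Finset.univ F) {s : Finset ι}
    (hs : s ∈ forestVerts Finset.univ F) (hcard : 2 ≤ s.card) :
    (childrenF Finset.univ F s).sup id = s := by
  refine le_antisymm (Finset.sup_le fun t ht => (child_ssubset ht).subset) fun x hx => ?_
  obtain ⟨t, ht, hxt⟩ := exists_child hF hs hcard hx
  exact Finset.mem_sup.mpr ⟨t, ht, hxt⟩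

lemma two_le_card_children (hF : IsReducedForest Finset.univ F) {s : Finset ι}
    (hs : s ∈ forestVerts Finset.univ F) (hcard : 2 ≤ s.card) :
    2 ≤ (childrenF Finset.univ F s).card := by
  have hpos : 0 < s.card := by omega
  obtain ⟨x, hx⟩ := Finset.card_pos.mp hpos
  obtain ⟨t, ht, hxt⟩ := exists_child hF hs hcard hx
  have hts : ¬ s ⊆ t := by
    have := child_ssubset ht
    rw [Finset.ssubset_def] at this
    exact this.2
  obtain ⟨z, hz⟩ : (s \ t).Nonempty := by rwa [Finset.sdiff_nonempty]
  obtain ⟨t', ht', hzt'⟩ := exists_child hF hs hcard (Finset.mem_sdiff.mp hz).1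
  have htne : t ≠ t' := fun h => (Finset.mem_sdiff.mp hz).2 (h ▸ hzt')
  exact Finset.one_lt_card.mpr ⟨t, ht, t', ht', htne⟩

lemma mem_rootsF {b : Finset ι} {s : Finset ι} :
    s ∈ rootsF b F ↔ s ∈ forestVerts b F ∧ ∀ u ∈ forestVerts b F, ¬s ⊂ u := by
  simp only [rootsF, Finset.mem_filter]

lemma exists_root_sub (hF : IsReducedForest Finset.univ F) {s : Finset ι}
    (hs : s ∈ forestVerts Finset.univ F) : ∃ r ∈ rootsF Finset.univ F, s ⊆ r := by
  classical
  set W := (forestVerts Finset.univ F).filter (fun t => s ⊆ t) with hW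
  have hne : W.Nonempty := ⟨s, by rw [hW, Finset.mem_filter]; exact ⟨hs, le_refl s⟩⟩
  obtain ⟨r, hrW, hmax⟩ : ∃ r ∈ W, ∀ u ∈ W, ¬ r < u := by
    obtain ⟨r, hr⟩ := Finset.exists_maximal hne
    exact ⟨r, hr.1, fun u hu hru => lt_irrefl _ (hru.trans_le (hr.2 hu hru.le))⟩
  rw [hW, Finset.mem_filter] at hrW
  refine ⟨r, mem_rootsF.mpr ⟨hrW.1, fun u hu hru => ?_⟩, hrW.2⟩
  exact hmax u (Finset.mem_filter.mpr ⟨hu, hrW.2.trans hru.subset⟩) hru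

lemma roots_disjoint (hF : IsReducedForest Finset.univ F) {r₁ r₂ : Finset ι}
    (h₁ : r₁ ∈ rootsF Finset.univ F) (h₂ : r₂ ∈ rootsF Finset.univ F)
    (hne : r₁ ≠ r₂) : Disjoint r₁ r₂ := by
  rcases laminar hF (mem_rootsF.mp h₁).1 (mem_rootsF.mp h₂).1 with h | h | h
  · exact absurd (lt_of_le_of_ne h hne) ((mem_rootsF.mp h₁).2 r₂ (mem_rootsF.mp h₂).1)
  · exact absurd (lt_of_le_of_ne h (Ne.symm hne)) ((mem_rootsF.mp h₂).2 r₁ (mem_rootsF.mp h₁).1)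
  · exact h

lemma roots_eq_of_not_disjoint (hF : IsReducedForest Finset.univ F) {r₁ r₂ : Finset ι}
    (h₁ : r₁ ∈ rootsF Finset.univ F) (h₂ : r₂ ∈ rootsF Finset.univ F)
    (h : ¬Disjoint r₁ r₂) : r₁ = r₂ := by
  by_contra hne
  exact h (roots_disjoint hF h₁ h₂ hne)

end ForestToolkit

section KappaVertLemmas

variable {ι : Type*} [DecidableEq ι] {A : Type*}

lemma map_attach_val {γ β : Type*} (s : Finset γ) (f : γ → β) :
    Multiset.map (fun t : {x // x ∈ s} => f t.1) s.attach.val = Multiset.map f s.val := by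
  conv_rhs => rw [← Multiset.attach_map_val s.val, Multiset.map_map]
  rfl

lemma kappaVert_singleton (k : Multiset A → A) (b : Finset ι) (F : Finset (Finset ι))
    (a : ι → A) (x : ι) : kappaVert k b F a {x} = a x := by
  rw [kappaVert]
  have h : ({x} : Finset ι).card = 1 := Finset.card_singleton x
  rw [dif_pos h]
  have hspec := (Finset.card_eq_one.mp h).choose_spec
  have hx : (Finset.card_eq_one.mp h).choose = x :=
    (Finset.singleton_injective hspec).symm
  rw [hx]

lemma kappaVert_ne_one (k : Multiset A → A) (b : Finset ι) (F : Finset (Finset ι))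
    (a : ι → A) {s : Finset ι} (h : s.card ≠ 1) :
    kappaVert k b F a s = k (Multiset.map (kappaVert k b F a) (childrenF b F s).val) := by
  rw [kappaVert, dif_neg h]
  congr 1
  exact map_attach_val (childrenF b F s) (kappaVert k b F a)

end KappaVertLemmas

section StabilitySection

variable {ι : Type*} [Fintype ι] [DecidableEq ι] {A : Type*}

lemma forestVerts_mono {F F' : Finset (Finset ι)} (hsub : F ⊆ F') {v : Finset ι}
    (hv : v ∈ forestVerts (Finset.univ : Finset ι) F) : v ∈ forestVerts Finset.univ F' := by
  rcases mem_forestVerts.mp hv with h | h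
  · exact mem_forestVerts.mpr (Or.inl (hsub h))
  · exact mem_forestVerts.mpr (Or.inr h)

lemma forestVerts_cases {F F' : Finset (Finset ι)} {v : Finset ι}
    (hv : v ∈ forestVerts (Finset.univ : Finset ι) F') :
    v ∈ forestVerts (Finset.univ : Finset ι) F ∨ (v ∈ F' ∧ v ∉ F) := by
  classical
  by_cases h : v ∈ F
  · exact Or.inl (mem_forestVerts_of_mem h)
  · rcases mem_forestVerts.mp hv with h' | h'
    · exact Or.inr ⟨h', h⟩
    · exact Or.inl (mem_forestVerts.mpr (Or.inr h'))

lemma childrenF_congr {F F' : Finset (Finset ι)} (hsub : F ⊆ F')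
    (hnew : ∀ u ∈ F', u ∉ F → ∀ v ∈ forestVerts (Finset.univ : Finset ι) F, ¬u ⊆ v)
    {s : Finset ι} (hs : s ∈ forestVerts Finset.univ F) :
    childrenF Finset.univ F' s = childrenF Finset.univ F s := by
  ext t
  rw [mem_childrenF, mem_childrenF]
  constructor
  · rintro ⟨htv, hts, hbet⟩
    have htF : t ∈ forestVerts Finset.univ F := by
      rcases forestVerts_cases htv with h | ⟨h1, h2⟩
      · exact h
      · exact absurd hts.subset (hnew t h1 h2 s hs)
    exact ⟨htF, hts, fun u hu => hbet u (forestVerts_mono hsub hu)⟩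
  · rintro ⟨htv, hts, hbet⟩
    refine ⟨forestVerts_mono hsub htv, hts, ?_⟩
    rintro u hu ⟨htu, hus⟩
    rcases forestVerts_cases hu with h | ⟨h1, h2⟩
    · exact hbet u h ⟨htu, hus⟩
    · exact hnew u h1 h2 s hs hus.subset

lemma kappaVert_congr (k : Multiset A → A) (a : ι → A) {F F' : Finset (Finset ι)}
    (hsub : F ⊆ F')
    (hnew : ∀ u ∈ F', u ∉ F → ∀ v ∈ forestVerts (Finset.univ : Finset ι) F, ¬u ⊆ v) :
    ∀ s, s ∈ forestVerts (Finset.univ : Finset ι) F →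
      kappaVert k Finset.univ F' a s = kappaVert k Finset.univ F a s := by
  intro s
  induction s using Finset.strongInduction with
  | _ s ih =>
    intro hs
    by_cases h1 : s.card = 1
    · obtain ⟨x, rfl⟩ := Finset.card_eq_one.mp h1
      rw [kappaVert_singleton, kappaVert_singleton]
    · rw [kappaVert_ne_one k _ _ _ h1, kappaVert_ne_one k _ _ _ h1,
        childrenF_congr hsub hnew hs]
      congr 1
      refine Multiset.map_congr rfl fun t ht => ?_
      have ht' : t ∈ childrenF Finset.univ F s := ht
      exact ih t (child_ssubset ht') (child_mem_verts ht')

end StabilitySection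

section BContext

variable {ι : Type*} [Fintype ι] [DecidableEq ι]

/-- The set of new top vertices determined by a partition of the roots:
the unions of the blocks with at least two elements. -/
def bigOf (P : Finset (Finset (Finset ι)))  : Finset (Finset ι) :=
  (P.filter fun C => 2 ≤ C.card).image fun C => C.sup id

lemma mem_bigOf {P : Finset (Finset (Finset ι))} {u : Finset ι} :
    u ∈ bigOf P ↔ ∃ C ∈ P, 2 ≤ C.card ∧ u = C.sup id := by
  simp only [bigOf, Finset.mem_image, Finset.mem_filter]
  constructor
  · rintro ⟨C, ⟨hC, h2⟩, rfl⟩; exact ⟨C, hC, h2, rfl⟩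
  · rintro ⟨C, hC, h2, rfl⟩; exact ⟨C, ⟨hC, h2⟩, rfl⟩

variable {F : Finset (Finset ι)} {P : Finset (Finset (Finset ι))}

lemma root_ssubset_sup (hF : IsReducedForest (Finset.univ : Finset ι) F)
    (hP : P ∈ partsOf (rootsF Finset.univ F)) {C : Finset (Finset ι)} {r : Finset ι}
    (hC : C ∈ P) (h2 : 2 ≤ C.card) (hr : r ∈ C) : r ⊂ C.sup id := by
  have hsub : r ⊆ C.sup id := Finset.le_sup (f := id) hr
  obtain ⟨r', hr', hne⟩ := Finset.exists_mem_ne (show 1 < C.card by omega) r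
  have hroot : r ∈ rootsF Finset.univ F := partsOf_block_subset hP hC hr
  have hroot' : r' ∈ rootsF Finset.univ F := partsOf_block_subset hP hC hr'
  obtain ⟨x, hx⟩ := vert_nonempty hF (mem_rootsF.mp hroot').1
  rw [Finset.ssubset_iff_of_subset hsub]
  refine ⟨x, Finset.mem_sup.mpr ⟨r', hr', hx⟩, ?_⟩
  exact Finset.disjoint_left.mp (roots_disjoint hF hroot' hroot hne) hx

lemma mem_of_subset_sup (hF : IsReducedForest (Finset.univ : Finset ι) F)
    (hP : P ∈ partsOf (rootsF Finset.univ F)) {C : Finset (Finset ι)} {r : Finset ι}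
    (hC : C ∈ P) (hr : r ∈ rootsF Finset.univ F) (hsub : r ⊆ C.sup id) : r ∈ C := by
  obtain ⟨x, hx⟩ := vert_nonempty hF (mem_rootsF.mp hr).1
  obtain ⟨r', hr', hxr'⟩ := Finset.mem_sup.mp (hsub hx)
  have : r = r' := by
    refine roots_eq_of_not_disjoint hF hr (partsOf_block_subset hP hC hr') ?_
    rw [Finset.not_disjoint_iff]
    exact ⟨x, hx, hxr'⟩
  exact this ▸ hr'

lemma sup_injOn (hF : IsReducedForest (Finset.univ : Finset ι) F)
    (hP : P ∈ partsOf (rootsF Finset.univ F)) {C₁ C₂ : Finset (Finset ι)}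
    (hC₁ : C₁ ∈ P) (hC₂ : C₂ ∈ P) (h : C₁.sup id = C₂.sup id) : C₁ = C₂ := by
  ext r
  constructor
  · intro hr
    exact mem_of_subset_sup hF hP hC₂ (partsOf_block_subset hP hC₁ hr)
      (h ▸ Finset.le_sup (f := id) hr)
  · intro hr
    exact mem_of_subset_sup hF hP hC₁ (partsOf_block_subset hP hC₂ hr)
      (h ▸ Finset.le_sup (f := id) hr)

lemma disjoint_sups (hF : IsReducedForest (Finset.univ : Finset ι) F)
    (hP : P ∈ partsOf (rootsF Finset.univ F)) {C₁ C₂ : Finset (Finset ι)}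
    (hC₁ : C₁ ∈ P) (hC₂ : C₂ ∈ P) (hne : C₁ ≠ C₂) :
    Disjoint (C₁.sup id) (C₂.sup id) := by
  rw [Finset.disjoint_left]
  intro x hx₁ hx₂
  obtain ⟨r₁, hr₁, hxr₁⟩ := Finset.mem_sup.mp hx₁
  obtain ⟨r₂, hr₂, hxr₂⟩ := Finset.mem_sup.mp hx₂
  have hrr : r₁ = r₂ := by
    refine roots_eq_of_not_disjoint hF (partsOf_block_subset hP hC₁ hr₁)
      (partsOf_block_subset hP hC₂ hr₂) ?_
    rw [Finset.not_disjoint_iff]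
    exact ⟨x, hxr₁, hxr₂⟩
  exact Finset.disjoint_left.mp (partsOf_disjoint hP hC₁ hC₂ hne) hr₁ (hrr ▸ hr₂)

lemma new_not_subset_vert (hF : IsReducedForest (Finset.univ : Finset ι) F)
    (hP : P ∈ partsOf (rootsF Finset.univ F)) {C : Finset (Finset ι)}
    (hC : C ∈ P) (h2 : 2 ≤ C.card) {v : Finset ι}
    (hv : v ∈ forestVerts Finset.univ F) : ¬ C.sup id ⊆ v := by
  intro hsub
  obtain ⟨r, hr⟩ := Finset.card_pos.mp (show 0 < C.card by omega)
  have : r ⊂ v := lt_of_lt_of_le (root_ssubset_sup hF hP hC h2 hr) hsub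
  exact (mem_rootsF.mp (partsOf_block_subset hP hC hr)).2 v hv this

lemma sup_card_two (hF : IsReducedForest (Finset.univ : Finset ι) F)
    (hP : P ∈ partsOf (rootsF Finset.univ F)) {C : Finset (Finset ι)}
    (hC : C ∈ P) (h2 : 2 ≤ C.card) : 2 ≤ (C.sup id).card := by
  obtain ⟨r, hr⟩ := Finset.card_pos.mp (show 0 < C.card by omega)
  have h1 : 0 < r.card := Finset.card_pos.mpr
    (vert_nonempty hF (mem_rootsF.mp (partsOf_block_subset hP hC hr)).1)
  have := Finset.card_lt_card (root_ssubset_sup hF hP hC h2 hr)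
  omega

lemma sup_nonempty (hF : IsReducedForest (Finset.univ : Finset ι) F)
    (hP : P ∈ partsOf (rootsF Finset.univ F)) {C : Finset (Finset ι)}
    (hC : C ∈ P) : (C.sup id).Nonempty := by
  obtain ⟨r, hr⟩ := partsOf_nonempty_block hP hC
  obtain ⟨x, hx⟩ := vert_nonempty hF (mem_rootsF.mp (partsOf_block_subset hP hC hr)).1
  exact ⟨x, Finset.mem_sup.mpr ⟨r, hr, hx⟩⟩

lemma root_subset_or_disjoint_sup (hF : IsReducedForest (Finset.univ : Finset ι) F)
    (hP : P ∈ partsOf (rootsF Finset.univ F)) {C : Finset (Finset ι)}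
    (hC : C ∈ P) {r : Finset ι} (hr : r ∈ rootsF Finset.univ F) :
    r ⊆ C.sup id ∨ Disjoint r (C.sup id) := by
  classical
  by_cases h : Disjoint r (C.sup id)
  · exact Or.inr h
  · rw [Finset.not_disjoint_iff] at h
    obtain ⟨x, hxr, hxs⟩ := h
    obtain ⟨r', hr', hxr'⟩ := Finset.mem_sup.mp hxs
    have : r = r' := roots_eq_of_not_disjoint hF hr (partsOf_block_subset hP hC hr')
      (Finset.not_disjoint_iff.mpr ⟨x, hxr, hxr'⟩)
    exact Or.inl (this ▸ Finset.le_sup (f := id) hr')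

lemma hnew_bigOf (hF : IsReducedForest (Finset.univ : Finset ι) F)
    (hP : P ∈ partsOf (rootsF Finset.univ F)) :
    ∀ u ∈ F ∪ bigOf P, u ∉ F → ∀ v ∈ forestVerts (Finset.univ : Finset ι) F, ¬u ⊆ v := by
  intro u hu huF v hv
  rcases Finset.mem_union.mp hu with h | h
  · exact absurd h huF
  · obtain ⟨C, hC, h2, rfl⟩ := mem_bigOf.mp h
    exact new_not_subset_vert hF hP hC h2 hv

lemma bigOf_not_mem_F (hF : IsReducedForest (Finset.univ : Finset ι) F)
    (hP : P ∈ partsOf (rootsF Finset.univ F)) {u : Finset ι} (hu : u ∈ bigOf P) : u ∉ F := by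
  intro huF
  obtain ⟨C, hC, h2, rfl⟩ := mem_bigOf.mp hu
  exact new_not_subset_vert hF hP hC h2 (mem_forestVerts_of_mem huF) le_rfl

lemma union_sdiff_bigOf (hF : IsReducedForest (Finset.univ : Finset ι) F)
    (hP : P ∈ partsOf (rootsF Finset.univ F)) : (F ∪ bigOf P) \ bigOf P = F := by
  ext s
  simp only [Finset.mem_sdiff, Finset.mem_union]
  constructor
  · rintro ⟨h | h, h2⟩
    · exact h
    · exact absurd h h2
  · intro h
    exact ⟨Or.inl h, fun hb => bigOf_not_mem_F hF hP hb h⟩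

lemma reduced_union (hF : IsReducedForest (Finset.univ : Finset ι) F)
    (hP : P ∈ partsOf (rootsF Finset.univ F)) :
    IsReducedForest (Finset.univ : Finset ι) (F ∪ bigOf P) := by
  constructor
  · intro s hs
    rcases Finset.mem_union.mp hs with h | h
    · exact hF.1 s h
    · obtain ⟨C, hC, h2, rfl⟩ := mem_bigOf.mp h
      exact ⟨Finset.subset_univ _, sup_card_two hF hP hC h2⟩
  · intro s hs t ht
    rcases Finset.mem_union.mp hs with h | h <;>
      rcases Finset.mem_union.mp ht with h' | h'
    · exact hF.2 s h t h'
    · obtain ⟨C, hC, h2, rfl⟩ := mem_bigOf.mp h'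
      obtain ⟨ρ, hρ, hsρ⟩ := exists_root_sub hF (mem_forestVerts_of_mem h)
      rcases root_subset_or_disjoint_sup hF hP hC hρ with hc | hc
      · exact Or.inl (hsρ.trans hc)
      · exact Or.inr (Or.inr (Finset.disjoint_of_subset_left hsρ hc))
    · obtain ⟨C, hC, h2, rfl⟩ := mem_bigOf.mp h
      obtain ⟨ρ, hρ, hsρ⟩ := exists_root_sub hF (mem_forestVerts_of_mem h')
      rcases root_subset_or_disjoint_sup hF hP hC hρ with hc | hc
      · exact Or.inr (Or.inl (hsρ.trans hc))
      · exact Or.inr (Or.inr (Finset.disjoint_of_subset_right hsρ hc.symm))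
    · obtain ⟨C, hC, h2, rfl⟩ := mem_bigOf.mp h
      obtain ⟨C', hC', h2', rfl⟩ := mem_bigOf.mp h'
      by_cases hCC : C = C'
      · exact Or.inl (hCC ▸ le_rfl)
      · exact Or.inr (Or.inr (disjoint_sups hF hP hC hC' hCC))

lemma childrenF_union_old {A : Type*} (k : Multiset A → A) (a : ι → A)
    (hF : IsReducedForest (Finset.univ : Finset ι) F)
    (hP : P ∈ partsOf (rootsF Finset.univ F)) {s : Finset ι}
    (hs : s ∈ forestVerts Finset.univ F) :
    kappaVert k Finset.univ (F ∪ bigOf P) a s = kappaVert k Finset.univ F a s :=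
  kappaVert_congr k a Finset.subset_union_left (hnew_bigOf hF hP) s hs

lemma childrenF_union_new (hF : IsReducedForest (Finset.univ : Finset ι) F)
    (hP : P ∈ partsOf (rootsF Finset.univ F)) {C : Finset (Finset ι)}
    (hC : C ∈ P) (h2 : 2 ≤ C.card) :
    childrenF Finset.univ (F ∪ bigOf P) (C.sup id) = C := by
  have hsupmem : C.sup id ∈ forestVerts Finset.univ (F ∪ bigOf P) :=
    mem_forestVerts_of_mem (Finset.mem_union_right _ (mem_bigOf.mpr ⟨C, hC, h2, rfl⟩))
  ext t
  rw [mem_childrenF]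
  constructor
  · rintro ⟨htv, hts, hbet⟩
    have htne : t.Nonempty := by
      rcases forestVerts_cases (F := F) htv with h | ⟨h1, h2'⟩
      · exact vert_nonempty hF h
      · rcases Finset.mem_union.mp h1 with h | h
        · exact absurd h h2'
        · obtain ⟨C'', hC'', _, rfl⟩ := mem_bigOf.mp h
          exact sup_nonempty hF hP hC''
    rcases forestVerts_cases (F := F) htv with hold | ⟨h1, h2'⟩
    · -- old vertex
      obtain ⟨ρ, hρ, htρ⟩ := exists_root_sub hF hold
      rcases root_subset_or_disjoint_sup hF hP hC hρ with hc | hc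
      · have hρC : ρ ∈ C := mem_of_subset_sup hF hP hC hρ hc
        have hρsup : ρ ⊂ C.sup id := root_ssubset_sup hF hP hC h2 hρC
        have : ¬ t ⊂ ρ := by
          intro hcon
          exact hbet ρ (forestVerts_mono Finset.subset_union_left (mem_rootsF.mp hρ).1)
            ⟨hcon, hρsup⟩
        have : t = ρ := le_antisymm htρ (by
          by_contra hcon
          exact this (lt_of_le_of_ne htρ (fun h => hcon (h ▸ le_rfl))))
        exact this ▸ hρC
      · exfalso
        obtain ⟨x, hx⟩ := htne
        exact Finset.disjoint_left.mp (Finset.disjoint_of_subset_left htρ hc) hx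
          (hts.subset hx)
    · -- new vertex
      rcases Finset.mem_union.mp h1 with h | h
      · exact absurd h h2'
      · obtain ⟨C', hC', h2'', rfl⟩ := mem_bigOf.mp h
        by_cases hCC : C' = C
        · subst hCC
          exact absurd hts (by simp [Finset.ssubset_def])
        · exfalso
          obtain ⟨x, hx⟩ := htne
          exact Finset.disjoint_left.mp (disjoint_sups hF hP hC' hC hCC) hx (hts.subset hx)
  · intro htC
    have hroot : t ∈ rootsF Finset.univ F := partsOf_block_subset hP hC htC
    refine ⟨forestVerts_mono Finset.subset_union_left (mem_rootsF.mp hroot).1,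
      root_ssubset_sup hF hP hC h2 htC, ?_⟩
    rintro w hw ⟨htw, hwsup⟩
    rcases forestVerts_cases (F := F) hw with hold | ⟨h1, h2'⟩
    · exact (mem_rootsF.mp hroot).2 w hold htw
    · rcases Finset.mem_union.mp h1 with h | h
      · exact absurd h h2'
      · obtain ⟨C', hC', h2'', rfl⟩ := mem_bigOf.mp h
        by_cases hCC : C' = C
        · subst hCC
          exact absurd hwsup (by simp [Finset.ssubset_def])
        · obtain ⟨x, hx⟩ := sup_nonempty hF hP hC'
          exact Finset.disjoint_left.mp (disjoint_sups hF hP hC' hC hCC) hx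
            (hwsup.subset hx)

lemma rootsF_union (hF : IsReducedForest (Finset.univ : Finset ι) F)
    (hP : P ∈ partsOf (rootsF Finset.univ F)) :
    rootsF Finset.univ (F ∪ bigOf P) = P.image fun C => C.sup id := by
  ext v
  constructor
  · intro hv
    obtain ⟨hvv, hvmax⟩ := mem_rootsF.mp hv
    rcases forestVerts_cases (F := F) hvv with hold | ⟨h1, h2'⟩
    · obtain ⟨ρ, hρ, hvρ⟩ := exists_root_sub hF hold
      obtain ⟨C, hC, hρC⟩ := partsOf_cover hP hρ
      by_cases h2 : 2 ≤ C.card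
      · exfalso
        have hρsup : ρ ⊂ C.sup id := root_ssubset_sup hF hP hC h2 hρC
        have hsupv : C.sup id ∈ forestVerts Finset.univ (F ∪ bigOf P) :=
          mem_forestVerts_of_mem (Finset.mem_union_right _ (mem_bigOf.mpr ⟨C, hC, h2, rfl⟩))
        exact hvmax (C.sup id) hsupv (lt_of_le_of_lt hvρ hρsup)
      · have hcard : C.card = 1 := by
          have := Finset.card_pos.mpr (partsOf_nonempty_block hP hC)
          omega
        obtain ⟨c, hc⟩ := Finset.card_eq_one.mp hcard
        have hCρ : C = {ρ} := by rw [hc]; rw [hc, Finset.mem_singleton] at hρC; rw [hρC]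
        have hvρ' : v = ρ := by
          refine le_antisymm hvρ ?_
          by_contra hcon
          have : v ⊂ ρ := lt_of_le_of_ne hvρ (fun h => hcon (h ▸ le_rfl))
          exact hvmax ρ (forestVerts_mono Finset.subset_union_left (mem_rootsF.mp hρ).1) this
        rw [Finset.mem_image]
        exact ⟨C, hC, by rw [hCρ, Finset.sup_singleton, ← hvρ']; rfl⟩
    · rcases Finset.mem_union.mp h1 with h | h
      · exact absurd h h2'
      · obtain ⟨C, hC, h2, rfl⟩ := mem_bigOf.mp h
        exact Finset.mem_image_of_mem _ hC
  · intro hv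
    obtain ⟨C, hC, rfl⟩ := Finset.mem_image.mp hv
    by_cases h2 : 2 ≤ C.card
    · refine mem_rootsF.mpr ⟨mem_forestVerts_of_mem
        (Finset.mem_union_right _ (mem_bigOf.mpr ⟨C, hC, h2, rfl⟩)), ?_⟩
      intro w hw hsw
      rcases forestVerts_cases (F := F) hw with hold | ⟨h1, h2'⟩
      · obtain ⟨r, hr⟩ := Finset.card_pos.mp (show 0 < C.card by omega)
        have : r ⊂ w := lt_trans (root_ssubset_sup hF hP hC h2 hr) hsw
        exact (mem_rootsF.mp (partsOf_block_subset hP hC hr)).2 w hold this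
      · rcases Finset.mem_union.mp h1 with h | h
        · exact absurd h h2'
        · obtain ⟨C', hC', h2'', rfl⟩ := mem_bigOf.mp h
          by_cases hCC : C = C'
          · subst hCC; exact absurd hsw (by simp [Finset.ssubset_def])
          · obtain ⟨x, hx⟩ := sup_nonempty hF hP hC
            exact Finset.disjoint_left.mp (disjoint_sups hF hP hC hC' hCC) hx
              (hsw.subset hx)
    · have hcard : C.card = 1 := by
        have := Finset.card_pos.mpr (partsOf_nonempty_block hP hC)
        omega
      obtain ⟨r, hc⟩ := Finset.card_eq_one.mp hcard
      subst hc
      rw [Finset.sup_singleton]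
      have hroot : r ∈ rootsF Finset.univ F :=
        partsOf_block_subset hP hC (Finset.mem_singleton_self r)
      refine mem_rootsF.mpr ⟨forestVerts_mono Finset.subset_union_left
        (mem_rootsF.mp hroot).1, ?_⟩
      intro w hw hrw
      rcases forestVerts_cases (F := F) hw with hold | ⟨h1, h2'⟩
      · exact (mem_rootsF.mp hroot).2 w hold hrw
      · rcases Finset.mem_union.mp h1 with h | h
        · exact absurd h h2'
        · obtain ⟨C', hC', h2'', rfl⟩ := mem_bigOf.mp h
          have hrC' : r ∈ C' := mem_of_subset_sup hF hP hC' hroot hrw.subset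
          have hne : ({r} : Finset (Finset ι)) ≠ C' := by
            intro hcon
            rw [← hcon, Finset.sup_singleton] at hrw
            exact lt_irrefl _ hrw
          exact Finset.disjoint_left.mp (partsOf_disjoint hP hC hC' hne)
            (Finset.mem_singleton_self r) hrC'

end BContext

section ValueB2

variable {R : Type*} {A : Type*} [CommRing R] [AddCommGroup A] [Module R A]
variable {ι : Type*} [Fintype ι] [DecidableEq ι]

lemma valueB2 (T : TwoMulAlg R A) {k : Multiset A → A} (hk : IsCumulant T k) (a : ι → A)
    {F : Finset (Finset ι)} {P : Finset (Finset (Finset ι))}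
    (hF : IsReducedForest (Finset.univ : Finset ι) F)
    (hP : P ∈ partsOf (rootsF Finset.univ F)) :
    T.dotProd P (fun C => k (Multiset.map (kappaVert k Finset.univ F a) C.val)) =
      T.dotProd (rootsF Finset.univ (F ∪ bigOf P)) (kappaVert k Finset.univ (F ∪ bigOf P) a) := by
  rw [rootsF_union hF hP]
  letI : CommMonoid A := (T.dotRing).toCommMonoid
  rw [T.dotProd_eq_prod, T.dotProd_eq_prod,
    Finset.prod_image (fun C hC D hD h => sup_injOn hF hP hC hD h)]
  refine Finset.prod_congr rfl fun C hC => ?_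
  by_cases h2 : 2 ≤ C.card
  · rw [kappaVert_ne_one k _ _ _ (by have := sup_card_two hF hP hC h2; omega),
      childrenF_union_new hF hP hC h2]
    congr 1
    refine Multiset.map_congr rfl fun r hr => ?_
    have hr' : r ∈ C := hr
    exact (childrenF_union_old k a hF hP
      (mem_rootsF.mp (partsOf_block_subset hP hC hr')).1).symm
  · have hcard : C.card = 1 := by
      have := Finset.card_pos.mpr (partsOf_nonempty_block hP hC)
      omega
    obtain ⟨r, rfl⟩ := Finset.card_eq_one.mp hcard
    have hroot : r ∈ rootsF Finset.univ F :=
      partsOf_block_subset hP hC (Finset.mem_singleton_self r)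
    have hsup : ({r} : Finset (Finset ι)).sup id = r := Finset.sup_singleton
    rw [hsup]
    have hval : ({r} : Finset (Finset ι)).val = {r} := rfl
    rw [hval, Multiset.map_singleton, hk.1,
      childrenF_union_old k a hF hP (mem_rootsF.mp hroot).1]

end ValueB2

section StepA

variable {ι : Type*} [Fintype ι] [DecidableEq ι] {n : ℕ}

/-- The fiber of the `i`-th part. -/
def fib (part : ι → Fin n) (i : Fin n) : Finset ι := Finset.univ.filter fun x => part x = i

lemma mem_fib {part : ι → Fin n} {i : Fin n} {x : ι} : x ∈ fib part i ↔ part x = i := by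
  simp [fib]

lemma fib_disjoint {part : ι → Fin n} {i j : Fin n} (h : i ≠ j) :
    Disjoint (fib part i) (fib part j) := by
  rw [Finset.disjoint_left]
  intro x hx hx'
  exact h ((mem_fib.mp hx).symm.trans (mem_fib.mp hx'))

open scoped Classical in
/-- Height-one forests whose blocks lie in fibers. -/
noncomputable def heightOne (part : ι → Fin n) : Finset (Finset (Finset ι)) :=
  Finset.univ.filter fun G =>
    (∀ c ∈ G, 2 ≤ c.card ∧ ∃ i, c ⊆ fib part i) ∧
    ∀ c ∈ G, ∀ d ∈ G, c ≠ d → Disjoint c d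

lemma mem_heightOne {part : ι → Fin n} {G : Finset (Finset ι)} :
    G ∈ heightOne part ↔
      (∀ c ∈ G, 2 ≤ c.card ∧ ∃ i, c ⊆ fib part i) ∧
      ∀ c ∈ G, ∀ d ∈ G, c ≠ d → Disjoint c d := by
  classical
  simp [heightOne]

lemma heightOne_reduced {part : ι → Fin n} {G : Finset (Finset ι)}
    (hG : G ∈ heightOne part) : IsReducedForest (Finset.univ : Finset ι) G := by
  rw [mem_heightOne] at hG
  refine ⟨fun s hs => ⟨Finset.subset_univ s, (hG.1 s hs).1⟩, fun s hs t ht => ?_⟩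
  by_cases h : s = t
  · exact Or.inl (h ▸ le_rfl)
  · exact Or.inr (Or.inr (hG.2 s hs t ht h))

open scoped Classical in
noncomputable def admOn (part : ι → Fin n) (I : Finset (Fin n)) : Finset (Finset (Finset ι)) :=
  (partsOf (I.biUnion (fib part))).filter fun P => ∀ c ∈ P, ∃ i ∈ I, c ⊆ fib part i

lemma mem_admOn {part : ι → Fin n} {I : Finset (Fin n)} {P : Finset (Finset ι)} :
    P ∈ admOn part I ↔ P ∈ partsOf (I.biUnion (fib part)) ∧
      ∀ c ∈ P, ∃ i ∈ I, c ⊆ fib part i := by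
  classical
  simp [admOn]

lemma partsOf_empty {κ : Type*} [DecidableEq κ] : partsOf (∅ : Finset κ) = {∅} := by
  ext P
  rw [mem_partsOf, Finset.mem_singleton]
  constructor
  · rintro ⟨h1, h2, h3⟩
    rw [Finset.eq_empty_iff_forall_notMem]
    intro C hC
    have hsub : C ⊆ ∅ := by
      have := Finset.le_sup (f := id) hC
      rw [h2] at this
      exact this
    rw [Finset.subset_empty] at hsub
    exact h3 (hsub ▸ hC)
  · rintro rfl
    exact ⟨Finset.supIndep_empty _, Finset.sup_empty, Finset.notMem_empty ∅⟩

section StepA2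

variable {R : Type*} {A : Type*} [CommRing R] [AddCommGroup A] [Module R A]

lemma dotProd_empty (T : TwoMulAlg R A) {γ : Type*} (g : γ → A) :
    T.dotProd (∅ : Finset γ) g = T.one := rfl

lemma stepA2 (T : TwoMulAlg R A) (part : ι → Fin n) (g : Finset ι → A) (I : Finset (Fin n)) :
    T.dotProd I (fun i => ∑ P ∈ partsOf (fib part i), T.dotProd P g)
      = ∑ P ∈ admOn part I, T.dotProd P g := by
  classical
  induction I using Finset.induction_on with
  | empty =>
    have hadm : admOn part (∅ : Finset (Fin n)) = {∅} := by
      ext P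
      rw [mem_admOn, Finset.biUnion_empty, partsOf_empty, Finset.mem_singleton]
      constructor
      · rintro ⟨rfl, _⟩; rfl
      · rintro rfl; exact ⟨rfl, fun c hc => absurd hc (Finset.notMem_empty c)⟩
    rw [hadm, Finset.sum_singleton, dotProd_empty, dotProd_empty]
  | @insert i I hiI ih =>
    letI : CommRing A := T.dotRing
    have hLHS : T.dotProd (insert i I) (fun j => ∑ P ∈ partsOf (fib part j), T.dotProd P g)
        = (∑ P ∈ partsOf (fib part i), T.dotProd P g) *
          T.dotProd I (fun j => ∑ P ∈ partsOf (fib part j), T.dotProd P g) := by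
      rw [T.dotProd_eq_prod, T.dotProd_eq_prod, Finset.prod_insert hiI]
    erw [hLHS, ih, Finset.sum_mul_sum, ← Finset.sum_product']
    have hdisjfib : Disjoint (fib part i) (I.biUnion (fib part)) := by
      rw [Finset.disjoint_biUnion_right]
      exact fun j hj => fib_disjoint (fun h => hiI (h ▸ hj))
    refine Finset.sum_nbij' (i := fun p => p.1 ∪ p.2)
      (j := fun Q => (Q.filter (· ⊆ fib part i), Q.filter (¬ · ⊆ fib part i)))
      ?_ ?_ ?_ ?_ ?_
    · -- forward membership
      rintro ⟨P₁, P₂⟩ hp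
      rw [Finset.mem_product] at hp
      obtain ⟨h₁, h₂⟩ := hp
      rw [mem_admOn] at h₂ ⊢
      obtain ⟨h₂p, h₂f⟩ := h₂
      have h₁p := mem_partsOf.mp h₁
      have h₂pp := mem_partsOf.mp h₂p
      have hblock₁ : ∀ c ∈ P₁, c ⊆ fib part i := fun c hc => partsOf_block_subset h₁ hc
      have hblock₂ : ∀ c ∈ P₂, c ⊆ I.biUnion (fib part) := fun c hc =>
        partsOf_block_subset h₂p hc
      constructor
      · rw [mem_partsOf]
        refine ⟨?_, ?_, ?_⟩
        · rw [Finset.supIndep_iff_pairwiseDisjoint]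
          intro c hc d hd hcd
          simp only [Finset.coe_union, Set.mem_union, Finset.mem_coe] at hc hd
          simp only [Function.onFun, id]
          rcases hc with hc | hc <;> rcases hd with hd | hd
          · exact partsOf_disjoint h₁ hc hd hcd
          · exact Finset.disjoint_of_subset_left (hblock₁ c hc)
              (Finset.disjoint_of_subset_right (hblock₂ d hd) hdisjfib)
          · exact Finset.disjoint_of_subset_left (hblock₂ c hc)
              (Finset.disjoint_of_subset_right (hblock₁ d hd) hdisjfib.symm)
          · exact partsOf_disjoint h₂p hc hd hcd
        · rw [Finset.sup_union, h₁p.2.1, h₂pp.2.1, Finset.biUnion_insert, Finset.sup_eq_union]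
        · rw [Finset.mem_union]
          rintro (h | h)
          · exact h₁p.2.2 h
          · exact h₂pp.2.2 h
      · intro c hc
        rcases Finset.mem_union.mp hc with h | h
        · exact ⟨i, Finset.mem_insert_self i I, hblock₁ c h⟩
        · obtain ⟨j, hj, hcj⟩ := h₂f c h
          exact ⟨j, Finset.mem_insert_of_mem hj, hcj⟩
    · -- backward membership
      intro Q hQ
      rw [mem_admOn] at hQ
      obtain ⟨hQp, hQf⟩ := hQ
      have hQpp := mem_partsOf.mp hQp
      rw [Finset.mem_product]
      have hcover : ∀ c ∈ Q, c ⊆ fib part i ∨ (¬ c ⊆ fib part i ∧ ∃ j ∈ I, c ⊆ fib part j) := by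
        intro c hc
        obtain ⟨j, hj, hcj⟩ := hQf c hc
        rcases Finset.mem_insert.mp hj with rfl | hjI
        · exact Or.inl hcj
        · refine Or.inr ⟨?_, j, hjI, hcj⟩
          intro hcon
          obtain ⟨x, hx⟩ := partsOf_nonempty_block hQp hc
          exact Finset.disjoint_left.mp (fib_disjoint (fun h : i = j => hiI (h ▸ hjI)))
            (hcon hx) (hcj hx)
      constructor
      · rw [mem_partsOf]
        refine ⟨((mem_partsOf.mp hQp).1).subset (Finset.filter_subset _ _), ?_, ?_⟩
        · refine le_antisymm (Finset.sup_le fun c hc => (Finset.mem_filter.mp hc).2) ?_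
          intro x hx
          have hxQ : x ∈ Q.sup id := by
            rw [hQpp.2.1, Finset.biUnion_insert]
            exact Finset.mem_union_left _ hx
          obtain ⟨c, hc, hxc⟩ := Finset.mem_sup.mp hxQ
          rcases hcover c hc with h | ⟨h, j, hjI, hcj⟩
          · exact Finset.mem_sup.mpr ⟨c, Finset.mem_filter.mpr ⟨hc, h⟩, hxc⟩
          · exact absurd hx (Finset.disjoint_left.mp
              (fib_disjoint (fun he : i = j => hiI (he ▸ hjI))).symm (hcj hxc) :)
        · intro h
          exact hQpp.2.2 (Finset.mem_filter.mp h).1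
      · rw [mem_admOn, mem_partsOf]
        refine ⟨⟨((mem_partsOf.mp hQp).1).subset (Finset.filter_subset _ _), ?_, ?_⟩, ?_⟩
        · refine le_antisymm (Finset.sup_le fun c hc => ?_) ?_
          · rcases hcover c (Finset.mem_filter.mp hc).1 with h | ⟨_, j, hjI, hcj⟩
            · exact absurd h (Finset.mem_filter.mp hc).2
            · exact le_trans hcj (Finset.subset_biUnion_of_mem (fib part) hjI)
          · intro x hx
            have hxQ : x ∈ Q.sup id := by
              rw [hQpp.2.1, Finset.biUnion_insert]
              exact Finset.mem_union_right _ hx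
            obtain ⟨c, hc, hxc⟩ := Finset.mem_sup.mp hxQ
            refine Finset.mem_sup.mpr ⟨c, Finset.mem_filter.mpr ⟨hc, ?_⟩, hxc⟩
            intro hcon
            obtain ⟨j, hjI, hxj⟩ := Finset.mem_biUnion.mp hx
            exact Finset.disjoint_left.mp
              (fib_disjoint (fun he : i = j => hiI (he ▸ hjI))) (hcon hxc) hxj
        · intro h
          exact hQpp.2.2 (Finset.mem_filter.mp h).1
        · intro c hc
          rcases hcover c (Finset.mem_filter.mp hc).1 with h | ⟨_, j, hjI, hcj⟩
          · exact absurd h (Finset.mem_filter.mp hc).2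
          · exact ⟨j, hjI, hcj⟩
    · -- left inverse
      rintro ⟨P₁, P₂⟩ hp
      rw [Finset.mem_product] at hp
      obtain ⟨h₁, h₂⟩ := hp
      rw [mem_admOn] at h₂
      have hP₁ : ∀ c ∈ P₁, c ⊆ fib part i := fun c hc => partsOf_block_subset h₁ hc
      have hP₂ : ∀ c ∈ P₂, ¬ c ⊆ fib part i := by
        intro c hc hcon
        obtain ⟨x, hx⟩ := partsOf_nonempty_block h₂.1 hc
        exact Finset.disjoint_left.mp hdisjfib (hcon hx)
          (partsOf_block_subset h₂.1 hc hx)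
      have e₁ : (P₁ ∪ P₂).filter (· ⊆ fib part i) = P₁ := by
        ext c
        rw [Finset.mem_filter, Finset.mem_union]
        constructor
        · rintro ⟨h | h, hsub⟩
          · exact h
          · exact absurd hsub (hP₂ c h)
        · intro h
          exact ⟨Or.inl h, hP₁ c h⟩
      have e₂ : (P₁ ∪ P₂).filter (¬ · ⊆ fib part i) = P₂ := by
        ext c
        rw [Finset.mem_filter, Finset.mem_union]
        constructor
        · rintro ⟨h | h, hsub⟩
          · exact absurd (hP₁ c h) hsub
          · exact h
        · intro h
          exact ⟨Or.inr h, hP₂ c h⟩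
      show (Finset.filter (· ⊆ fib part i) (P₁ ∪ P₂),
        Finset.filter (¬ · ⊆ fib part i) (P₁ ∪ P₂)) = (P₁, P₂)
      rw [e₁, e₂]
    · -- right inverse
      intro Q _
      exact Finset.filter_union_filter_not_eq _ Q
    · -- values
      rintro ⟨P₁, P₂⟩ hp
      rw [Finset.mem_product] at hp
      obtain ⟨h₁, h₂⟩ := hp
      rw [mem_admOn] at h₂
      have hdisjP : Disjoint P₁ P₂ := by
        rw [Finset.disjoint_left]
        intro c hc hc'
        obtain ⟨x, hx⟩ := partsOf_nonempty_block h₁ hc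
        exact Finset.disjoint_left.mp hdisjfib (partsOf_block_subset h₁ hc hx)
          (partsOf_block_subset h₂.1 hc' hx)
      show T.dotProd P₁ g * T.dotProd P₂ g = T.dotProd (P₁ ∪ P₂) g
      rw [T.dotProd_eq_prod, T.dotProd_eq_prod, T.dotProd_eq_prod]
      exact (Finset.prod_union hdisjP).symm

end StepA2

end StepA

section StepAAssemble

variable {ι : Type*} [Fintype ι] [DecidableEq ι] {n : ℕ}

lemma children_heightOne {part : ι → Fin n} {G : Finset (Finset ι)} (hG : G ∈ heightOne part)
    {c : Finset ι} (hc : c ∈ G) :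
    childrenF Finset.univ G c = c.map ⟨fun x => {x}, Finset.singleton_injective⟩ := by
  have h2 : 2 ≤ c.card := ((mem_heightOne.mp hG).1 c hc).1
  have hdisj := (mem_heightOne.mp hG).2
  ext t
  rw [mem_childrenF, Finset.mem_map]
  simp only [Function.Embedding.coeFn_mk]
  constructor
  · rintro ⟨htv, hts, hbet⟩
    rcases mem_forestVerts.mp htv with h | ⟨x, rfl⟩
    · exfalso
      have hne : t ≠ c := by
        intro he; subst he; exact absurd hts (by simp [Finset.ssubset_def])
      obtain ⟨x, hx⟩ := Finset.card_pos.mp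
        (show 0 < t.card by have := ((mem_heightOne.mp hG).1 t h).1; omega)
      exact Finset.disjoint_left.mp (hdisj t h c hc hne) hx (hts.subset hx)
    · exact ⟨x, hts.subset (Finset.mem_singleton_self x), rfl⟩
  · rintro ⟨x, hx, rfl⟩
    refine ⟨singleton_mem_forestVerts x, ?_, ?_⟩
    · rw [Finset.ssubset_iff_of_subset (Finset.singleton_subset_iff.mpr hx)]
      obtain ⟨y, hy, hyx⟩ := Finset.exists_mem_ne (show 1 < c.card by omega) x
      exact ⟨y, hy, by simp [hyx]⟩
    · rintro u hu ⟨hxu, huc⟩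
      rcases mem_forestVerts.mp hu with h | ⟨y, rfl⟩
      · have hne : u ≠ c := by
          intro he; subst he; exact absurd huc (by simp [Finset.ssubset_def])
        obtain ⟨z, hz⟩ := Finset.card_pos.mp
          (show 0 < u.card by have := ((mem_heightOne.mp hG).1 u h).1; omega)
        exact Finset.disjoint_left.mp (hdisj u h c hc hne) hz (huc.subset hz)
      · have h1 := Finset.card_lt_card hxu
        simp at h1

lemma roots_heightOne {part : ι → Fin n} {G : Finset (Finset ι)} (hG : G ∈ heightOne part) :
    rootsF Finset.univ G =
      G ∪ (Finset.univ \ G.sup id).image (fun x => ({x} : Finset ι)) := by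
  have hmem := (mem_heightOne.mp hG).1
  have hdisj := (mem_heightOne.mp hG).2
  ext v
  rw [mem_rootsF, Finset.mem_union, Finset.mem_image]
  constructor
  · rintro ⟨hv, hmax⟩
    rcases mem_forestVerts.mp hv with h | ⟨x, rfl⟩
    · exact Or.inl h
    · refine Or.inr ⟨x, ?_, rfl⟩
      rw [Finset.mem_sdiff]
      refine ⟨Finset.mem_univ x, ?_⟩
      intro hx
      obtain ⟨c, hc, hxc⟩ := Finset.mem_sup.mp hx
      simp only [id] at hxc
      refine hmax c (mem_forestVerts_of_mem hc) ?_
      rw [Finset.ssubset_iff_of_subset (Finset.singleton_subset_iff.mpr hxc)]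
      obtain ⟨y, hy, hyx⟩ := Finset.exists_mem_ne
        (show 1 < c.card by have := (hmem c hc).1; omega) x
      exact ⟨y, hy, by simp [hyx]⟩
  · intro hv
    rcases hv with h | ⟨x, hx, rfl⟩
    · refine ⟨mem_forestVerts_of_mem h, ?_⟩
      intro u hu hvu
      rcases mem_forestVerts.mp hu with h' | ⟨y, rfl⟩
      · have hne : v ≠ u := by
          intro he; subst he; exact absurd hvu (by simp [Finset.ssubset_def])
        obtain ⟨z, hz⟩ := Finset.card_pos.mp
          (show 0 < v.card by have := (hmem v h).1; omega)
        exact Finset.disjoint_left.mp (hdisj v h u h' hne) hz (hvu.subset hz)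
      · have h1 := Finset.card_lt_card hvu
        have h2 := (hmem v h).1
        simp only [Finset.card_singleton] at h1
        omega
    · refine ⟨singleton_mem_forestVerts x, ?_⟩
      intro u hu hvu
      rcases mem_forestVerts.mp hu with h' | ⟨y, rfl⟩
      · have hxu : x ∈ u := hvu.subset (Finset.mem_singleton_self x)
        have : x ∈ G.sup id := Finset.mem_sup.mpr ⟨u, h', hxu⟩
        rw [Finset.mem_sdiff] at hx
        exact hx.2 this
      · have := Finset.card_lt_card hvu
        simp at this

lemma kappaVert_heightOne {part : ι → Fin n} {G : Finset (Finset ι)}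
    (hG : G ∈ heightOne part) {A : Type*} (k : Multiset A → A) (a : ι → A)
    {c : Finset ι} (hc : c ∈ G) :
    kappaVert k Finset.univ G a c = k (Multiset.map a c.val) := by
  have h2 := ((mem_heightOne.mp hG).1 c hc).1
  rw [kappaVert_ne_one k _ _ _ (by omega), children_heightOne hG hc]
  congr 1
  rw [Finset.map_val, Multiset.map_map]
  exact Multiset.map_congr rfl fun x _ => kappaVert_singleton k Finset.univ G a x

lemma biUnion_fib {part : ι → Fin n} :
    (Finset.univ : Finset (Fin n)).biUnion (fib part) = Finset.univ := by
  ext x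
  constructor
  · intro _; exact Finset.mem_univ x
  · intro _
    exact Finset.mem_biUnion.mpr ⟨part x, Finset.mem_univ _, mem_fib.mpr rfl⟩

variable {R : Type*} {A : Type*} [CommRing R] [AddCommGroup A] [Module R A]

lemma stepA3 (T : TwoMulAlg R A) {k : Multiset A → A} (hk : IsCumulant T k)
    (part : ι → Fin n) (a : ι → A) :
    ∑ P ∈ admOn part Finset.univ, T.dotProd P (fun c => k (Multiset.map a c.val))
      = ∑ G ∈ heightOne part,
          T.dotProd (rootsF Finset.univ G) (kappaVert k Finset.univ G a) := by
  classical
  have hmemadm : ∀ P ∈ admOn part Finset.univ, P ∈ partsOf (Finset.univ : Finset ι) ∧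
      ∀ c ∈ P, ∃ i, c ⊆ fib part i := by
    intro P hP
    rw [mem_admOn, biUnion_fib] at hP
    exact ⟨hP.1, fun c hc => (hP.2 c hc).elim (fun i hi => ⟨i, hi.2⟩)⟩
  have hjmem : ∀ G ∈ heightOne part,
      G ∪ (Finset.univ \ G.sup id).image (fun x => ({x} : Finset ι))
        ∈ admOn part Finset.univ := by
    intro G hG
    have hmem := (mem_heightOne.mp hG).1
    have hdisj := (mem_heightOne.mp hG).2
    rw [mem_admOn, biUnion_fib, mem_partsOf]
    refine ⟨⟨?_, ?_, ?_⟩, ?_⟩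
    · rw [Finset.supIndep_iff_pairwiseDisjoint]
      intro c hc d hd hcd
      simp only [Finset.coe_union, Set.mem_union, Finset.mem_coe, Finset.mem_image] at hc hd
      simp only [Function.onFun, id]
      rcases hc with hc | ⟨x, hx, rfl⟩ <;> rcases hd with hd | ⟨y, hy, rfl⟩
      · exact hdisj c hc d hd hcd
      · rw [Finset.disjoint_singleton_right]
        intro hyc
        exact (Finset.mem_sdiff.mp hy).2 (Finset.mem_sup.mpr ⟨c, hc, hyc⟩)
      · rw [Finset.disjoint_singleton_left]
        intro hxd
        exact (Finset.mem_sdiff.mp hx).2 (Finset.mem_sup.mpr ⟨d, hd, hxd⟩)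
      · rw [Finset.disjoint_singleton_left, Finset.mem_singleton]
        intro he
        exact hcd (he ▸ rfl)
    · refine le_antisymm (Finset.sup_le fun c _ => Finset.subset_univ c) fun x _ => ?_
      by_cases hx : x ∈ G.sup id
      · obtain ⟨c, hc, hxc⟩ := Finset.mem_sup.mp hx
        exact Finset.mem_sup.mpr ⟨c, Finset.mem_union_left _ hc, hxc⟩
      · refine Finset.mem_sup.mpr ⟨{x}, Finset.mem_union_right _ ?_, Finset.mem_singleton_self x⟩
        exact Finset.mem_image_of_mem _ (Finset.mem_sdiff.mpr ⟨Finset.mem_univ x, hx⟩)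
    · rw [Finset.mem_union]
      rintro (h | h)
      · have := (hmem ∅ h).1
        simp at this
      · obtain ⟨x, _, hx⟩ := Finset.mem_image.mp h
        exact absurd hx (Finset.singleton_ne_empty x)
    · intro c hc
      rcases Finset.mem_union.mp hc with h | h
      · obtain ⟨i, hi⟩ := (hmem c h).2
        exact ⟨i, Finset.mem_univ i, hi⟩
      · obtain ⟨x, _, rfl⟩ := Finset.mem_image.mp h
        exact ⟨part x, Finset.mem_univ _, fun y hy =>
          mem_fib.mpr (by rw [Finset.mem_singleton.mp hy])⟩
  refine Finset.sum_nbij' (i := fun P => P.filter (fun c => 2 ≤ c.card))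
    (j := fun G => G ∪ (Finset.univ \ G.sup id).image (fun x => ({x} : Finset ι)))
    ?_ ?_ ?_ ?_ ?_
  · -- i maps admOn into heightOne
    intro P hP
    obtain ⟨hPp, hPf⟩ := hmemadm P hP
    rw [mem_heightOne]
    refine ⟨fun c hc => ⟨(Finset.mem_filter.mp hc).2, hPf c (Finset.mem_filter.mp hc).1⟩,
      fun c hc d hd hcd => partsOf_disjoint hPp (Finset.mem_filter.mp hc).1
        (Finset.mem_filter.mp hd).1 hcd⟩
  · -- j maps heightOne into admOn
    exact hjmem
  · -- j ∘ i = id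
    intro P hP
    obtain ⟨hPp, hPf⟩ := hmemadm P hP
    set G := P.filter (fun c => 2 ≤ c.card) with hGdef
    show G ∪ (Finset.univ \ G.sup id).image (fun x => ({x} : Finset ι)) = P
    ext c
    rw [Finset.mem_union, Finset.mem_image]
    constructor
    · rintro (h | ⟨x, hx, rfl⟩)
      · exact (Finset.mem_filter.mp h).1
      · rw [Finset.mem_sdiff] at hx
        obtain ⟨d, hd, hxd⟩ := partsOf_cover hPp (Finset.mem_univ x)
        have hdsmall : ¬ 2 ≤ d.card := by
          intro h2
          exact hx.2 (Finset.mem_sup.mpr ⟨d, Finset.mem_filter.mpr ⟨hd, h2⟩, hxd⟩)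
        have hdcard : d.card = 1 := by
          have := Finset.card_pos.mpr (partsOf_nonempty_block hPp hd)
          omega
        obtain ⟨y, rfl⟩ := Finset.card_eq_one.mp hdcard
        rw [Finset.mem_singleton] at hxd
        rw [← hxd] at hd
        exact hd
    · intro hc
      by_cases h2 : 2 ≤ c.card
      · exact Or.inl (Finset.mem_filter.mpr ⟨hc, h2⟩)
      · have hccard : c.card = 1 := by
          have := Finset.card_pos.mpr (partsOf_nonempty_block hPp hc)
          omega
        obtain ⟨x, rfl⟩ := Finset.card_eq_one.mp hccard
        refine Or.inr ⟨x, Finset.mem_sdiff.mpr ⟨Finset.mem_univ x, ?_⟩, rfl⟩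
        intro hx
        obtain ⟨d, hd, hxd⟩ := Finset.mem_sup.mp hx
        rw [Finset.mem_filter] at hd
        have hne : d ≠ {x} := by
          intro he
          rw [he, Finset.card_singleton] at hd
          omega
        exact Finset.disjoint_left.mp (partsOf_disjoint hPp hd.1 hc hne) hxd
          (Finset.mem_singleton_self x)
  · -- i ∘ j = id
    intro G hG
    have hmem := (mem_heightOne.mp hG).1
    show (G ∪ (Finset.univ \ G.sup id).image (fun x => ({x} : Finset ι))).filter
        (fun c => 2 ≤ c.card) = G
    ext c
    rw [Finset.mem_filter, Finset.mem_union, Finset.mem_image]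
    constructor
    · rintro ⟨h | ⟨x, _, rfl⟩, h2⟩
      · exact h
      · rw [Finset.card_singleton] at h2
        omega
    · intro hc
      exact ⟨Or.inl hc, (hmem c hc).1⟩
  · -- values
    intro P hP
    obtain ⟨hPp, hPf⟩ := hmemadm P hP
    set G := P.filter (fun c => 2 ≤ c.card) with hGdef
    have hGmem : G ∈ heightOne part := by
      rw [mem_heightOne]
      exact ⟨fun c hc => ⟨(Finset.mem_filter.mp hc).2, hPf c (Finset.mem_filter.mp hc).1⟩,
        fun c hc d hd hcd => partsOf_disjoint hPp (Finset.mem_filter.mp hc).1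
          (Finset.mem_filter.mp hd).1 hcd⟩
    have hroots : rootsF Finset.univ G = P := by
      rw [roots_heightOne hGmem]
      -- same as j ∘ i = id above
      ext c
      rw [Finset.mem_union, Finset.mem_image]
      constructor
      · rintro (h | ⟨x, hx, rfl⟩)
        · exact (Finset.mem_filter.mp h).1
        · rw [Finset.mem_sdiff] at hx
          obtain ⟨d, hd, hxd⟩ := partsOf_cover hPp (Finset.mem_univ x)
          have hdsmall : ¬ 2 ≤ d.card := by
            intro h2
            exact hx.2 (Finset.mem_sup.mpr ⟨d, Finset.mem_filter.mpr ⟨hd, h2⟩, hxd⟩)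
          have hdcard : d.card = 1 := by
            have := Finset.card_pos.mpr (partsOf_nonempty_block hPp hd)
            omega
          obtain ⟨y, rfl⟩ := Finset.card_eq_one.mp hdcard
          rw [Finset.mem_singleton] at hxd
          rw [← hxd] at hd
          exact hd
      · intro hc
        by_cases h2 : 2 ≤ c.card
        · exact Or.inl (Finset.mem_filter.mpr ⟨hc, h2⟩)
        · have hccard : c.card = 1 := by
            have := Finset.card_pos.mpr (partsOf_nonempty_block hPp hc)
            omega
          obtain ⟨x, rfl⟩ := Finset.card_eq_one.mp hccard
          refine Or.inr ⟨x, Finset.mem_sdiff.mpr ⟨Finset.mem_univ x, ?_⟩, rfl⟩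
          intro hx
          obtain ⟨d, hd, hxd⟩ := Finset.mem_sup.mp hx
          rw [Finset.mem_filter] at hd
          have hne : d ≠ {x} := by
            intro he
            rw [he, Finset.card_singleton] at hd
            omega
          exact Finset.disjoint_left.mp (partsOf_disjoint hPp hd.1 hc hne) hxd
            (Finset.mem_singleton_self x)
    rw [hroots]
    refine T.dotProd_congr fun c hc => ?_
    by_cases h2 : 2 ≤ c.card
    · exact (kappaVert_heightOne hGmem k a (Finset.mem_filter.mpr ⟨hc, h2⟩)).symm
    · have hccard : c.card = 1 := by
        have := Finset.card_pos.mpr (partsOf_nonempty_block hPp hc)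
        omega
      obtain ⟨x, rfl⟩ := Finset.card_eq_one.mp hccard
      rw [kappaVert_singleton]
      have hval : ({x} : Finset ι).val = {x} := rfl
      rw [hval, Multiset.map_singleton, hk.1]

lemma stepA (T : TwoMulAlg R A) {k : Multiset A → A} (hk : IsCumulant T k)
    (part : ι → Fin n) (a : ι → A) :
    T.dotProd (Finset.univ : Finset (Fin n)) (fun i => T.starProd (fib part i) a)
      = ∑ G ∈ heightOne part,
          T.dotProd (rootsF Finset.univ G) (kappaVert k Finset.univ G a) := by
  rw [T.dotProd_congr (fun i _ => T.expand hk (fib part i) a),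
    stepA2 T part _ Finset.univ]
  exact stepA3 T hk part a

end StepAAssemble

section StepBPrep

variable {ι : Type*} [Fintype ι] [DecidableEq ι] {n : ℕ}

lemma reduced_subset {F F' : Finset (Finset ι)} (hsub : F' ⊆ F)
    (hF : IsReducedForest (Finset.univ : Finset ι) F) :
    IsReducedForest (Finset.univ : Finset ι) F' :=
  ⟨fun s hs => hF.1 s (hsub hs), fun s hs t ht => hF.2 s (hsub hs) t (hsub ht)⟩

variable {G S : Finset (Finset ι)}

lemma not_vert_sdiff (hG : IsReducedForest (Finset.univ : Finset ι) G)
    (hS1 : S ⊆ G) {u : Finset ι} (hu : u ∈ S) :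
    u ∉ forestVerts (Finset.univ : Finset ι) (G \ S) := by
  intro hcon
  rcases mem_forestVerts.mp hcon with h | ⟨x, rfl⟩
  · exact (Finset.mem_sdiff.mp h).2 hu
  · have := (hG.1 _ (hS1 hu)).2
    simp at this

lemma childrenF_sdiff (hG : IsReducedForest (Finset.univ : Finset ι) G)
    (hS1 : S ⊆ G) (hS2 : S ⊆ rootsF Finset.univ G) {u : Finset ι} (hu : u ∈ S) :
    childrenF Finset.univ G u = (rootsF Finset.univ (G \ S)).filter (· ⊆ u) := by
  have huV : u ∈ forestVerts (Finset.univ : Finset ι) G := mem_forestVerts_of_mem (hS1 hu)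
  have hGS : IsReducedForest (Finset.univ : Finset ι) (G \ S) :=
    reduced_subset Finset.sdiff_subset hG
  ext t
  rw [Finset.mem_filter, mem_childrenF, mem_rootsF]
  constructor
  · rintro ⟨htv, htu, hbet⟩
    have htvs : t ∈ forestVerts (Finset.univ : Finset ι) (G \ S) := by
      rcases mem_forestVerts.mp htv with h | h
      · by_cases htS : t ∈ S
        · exact absurd htu ((mem_rootsF.mp (hS2 htS)).2 u huV)
        · exact mem_forestVerts.mpr (Or.inl (Finset.mem_sdiff.mpr ⟨h, htS⟩))
      · exact mem_forestVerts.mpr (Or.inr h)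
    refine ⟨⟨htvs, ?_⟩, htu.subset⟩
    intro w hw htw
    have hwV : w ∈ forestVerts (Finset.univ : Finset ι) G :=
      forestVerts_mono Finset.sdiff_subset hw
    rcases laminar hG hwV huV with h | h | h
    · have hwu : w ⊂ u := by
        refine lt_of_le_of_ne h ?_
        intro he
        exact not_vert_sdiff hG hS1 hu (he ▸ hw)
      exact hbet w hwV ⟨htw, hwu⟩
    · have huw : u ⊂ w := by
        refine lt_of_le_of_ne h ?_
        intro he
        exact not_vert_sdiff hG hS1 hu (he ▸ hw)
      exact (mem_rootsF.mp (hS2 hu)).2 w hwV huw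
    · obtain ⟨x, hx⟩ := vert_nonempty hG (forestVerts_mono Finset.sdiff_subset htvs)
      exact Finset.disjoint_left.mp h (htw.subset hx) (htu.subset hx)
  · rintro ⟨⟨htv, hmax⟩, htu⟩
    have htvG : t ∈ forestVerts (Finset.univ : Finset ι) G :=
      forestVerts_mono Finset.sdiff_subset htv
    have htu' : t ⊂ u := by
      refine lt_of_le_of_ne htu ?_
      intro he
      exact not_vert_sdiff hG hS1 hu (he ▸ htv)
    refine ⟨htvG, htu', ?_⟩
    rintro w hwV ⟨htw, hwu⟩
    rcases mem_forestVerts.mp hwV with h | h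
    · by_cases hwS : w ∈ S
      · exact (mem_rootsF.mp (hS2 hwS)).2 u huV hwu
      · exact hmax w (mem_forestVerts.mpr (Or.inl (Finset.mem_sdiff.mpr ⟨h, hwS⟩))) htw
    · exact hmax w (mem_forestVerts.mpr (Or.inr h)) htw

/-- The partition of the roots of `G \ S` induced by `(G, S)`. -/
def Pof (G S : Finset (Finset ι)) : Finset (Finset (Finset ι)) :=
  S.image (fun u => childrenF Finset.univ G u) ∪
    ((rootsF Finset.univ (G \ S)).filter (fun r => ∀ u ∈ S, ¬ r ⊆ u)).image
      (fun r => ({r} : Finset (Finset ι)))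

lemma children_nonempty_card (hG : IsReducedForest (Finset.univ : Finset ι) G)
    (hS1 : S ⊆ G) {u : Finset ι} (hu : u ∈ S) :
    2 ≤ (childrenF Finset.univ G u).card :=
  two_le_card_children hG (mem_forestVerts_of_mem (hS1 hu)) (hG.1 u (hS1 hu)).2

lemma children_sup_eq (hG : IsReducedForest (Finset.univ : Finset ι) G)
    (hS1 : S ⊆ G) {u : Finset ι} (hu : u ∈ S) :
    (childrenF Finset.univ G u).sup id = u :=
  children_sup hG (mem_forestVerts_of_mem (hS1 hu)) (hG.1 u (hS1 hu)).2

lemma Pof_mem_partsOf (hG : IsReducedForest (Finset.univ : Finset ι) G)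
    (hS1 : S ⊆ G) (hS2 : S ⊆ rootsF Finset.univ G) :
    Pof G S ∈ partsOf (rootsF Finset.univ (G \ S)) := by
  classical
  have hchild : ∀ u ∈ S, childrenF Finset.univ G u
      = (rootsF Finset.univ (G \ S)).filter (· ⊆ u) := fun u hu => childrenF_sdiff hG hS1 hS2 hu
  rw [mem_partsOf]
  refine ⟨?_, ?_, ?_⟩
  · rw [Finset.supIndep_iff_pairwiseDisjoint]
    intro C hC D hD hCD
    simp only [Finset.coe_union, Set.mem_union, Finset.mem_coe, Finset.mem_image,
      Pof] at hC hD
    simp only [Function.onFun, id]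
    rw [Finset.disjoint_left]
    intro r hrC hrD
    rcases hC with ⟨u, hu, rfl⟩ | ⟨r₁, hr₁, rfl⟩ <;>
      rcases hD with ⟨u', hu', rfl⟩ | ⟨r₂, hr₂, rfl⟩
    · rw [hchild u hu, Finset.mem_filter] at hrC
      rw [hchild u' hu', Finset.mem_filter] at hrD
      have huu : u ≠ u' := fun he => hCD (he ▸ rfl)
      obtain ⟨x, hx⟩ := vert_nonempty (reduced_subset Finset.sdiff_subset hG)
        (mem_rootsF.mp hrC.1).1
      exact Finset.disjoint_left.mp (roots_disjoint hG (hS2 hu) (hS2 hu') huu)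
        (hrC.2 hx) (hrD.2 hx)
    · rw [hchild u hu, Finset.mem_filter] at hrC
      rw [Finset.mem_singleton] at hrD
      subst hrD
      exact (Finset.mem_filter.mp hr₂).2 u hu hrC.2
    · rw [hchild u' hu', Finset.mem_filter] at hrD
      rw [Finset.mem_singleton] at hrC
      subst hrC
      exact (Finset.mem_filter.mp hr₁).2 u' hu' hrD.2
    · rw [Finset.mem_singleton] at hrC hrD
      exact hCD (by rw [← hrC, ← hrD])
  · refine le_antisymm (Finset.sup_le fun C hC => ?_) fun r hr => ?_
    · simp only [Pof, Finset.mem_union, Finset.mem_image] at hC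
      rcases hC with ⟨u, hu, rfl⟩ | ⟨r₁, hr₁, rfl⟩
      · rw [hchild u hu]
        exact Finset.filter_subset _ _
      · intro r hr
        rw [Finset.mem_singleton.mp hr]
        exact (Finset.mem_filter.mp hr₁).1
    · by_cases h : ∃ u ∈ S, r ⊆ u
      · obtain ⟨u, hu, hru⟩ := h
        refine Finset.mem_sup.mpr ⟨childrenF Finset.univ G u, ?_, ?_⟩
        · exact Finset.mem_union_left _ (Finset.mem_image_of_mem _ hu)
        · rw [hchild u hu]
          exact Finset.mem_filter.mpr ⟨hr, hru⟩
      · push_neg at h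
        refine Finset.mem_sup.mpr ⟨{r}, ?_, Finset.mem_singleton_self r⟩
        exact Finset.mem_union_right _
          (Finset.mem_image_of_mem _ (Finset.mem_filter.mpr ⟨hr, h⟩))
  · intro hcon
    simp only [Pof, Finset.mem_union, Finset.mem_image] at hcon
    rcases hcon with ⟨u, hu, he⟩ | ⟨r, _, he⟩
    · have := children_nonempty_card hG hS1 hu
      rw [he] at this
      simp at this
    · exact absurd he (Finset.singleton_ne_empty r)

lemma bigOf_Pof (hG : IsReducedForest (Finset.univ : Finset ι) G)
    (hS1 : S ⊆ G) (hS2 : S ⊆ rootsF Finset.univ G) : bigOf (Pof G S) = S := by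
  classical
  ext u
  rw [mem_bigOf]
  constructor
  · rintro ⟨C, hC, h2, rfl⟩
    simp only [Pof, Finset.mem_union, Finset.mem_image] at hC
    rcases hC with ⟨u', hu', rfl⟩ | ⟨r, _, rfl⟩
    · rw [children_sup_eq hG hS1 hu']
      exact hu'
    · simp at h2
  · intro hu
    refine ⟨childrenF Finset.univ G u, ?_, children_nonempty_card hG hS1 hu, ?_⟩
    · exact Finset.mem_union_left _ (Finset.mem_image_of_mem _ hu)
    · rw [children_sup_eq hG hS1 hu]

lemma P_determined {F : Finset (Finset ι)} {P : Finset (Finset (Finset ι))}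
    (hF : IsReducedForest (Finset.univ : Finset ι) F)
    (hP : P ∈ partsOf (rootsF Finset.univ F)) :
    P = (bigOf P).image (fun u => (rootsF Finset.univ F).filter (· ⊆ u)) ∪
        ((rootsF Finset.univ F).filter (fun r => ∀ u ∈ bigOf P, ¬ r ⊆ u)).image
          (fun r => ({r} : Finset (Finset ι))) := by
  classical
  have hfil : ∀ C ∈ P, 2 ≤ C.card →
      (rootsF Finset.univ F).filter (· ⊆ C.sup id) = C := by
    intro C hC _
    ext r
    rw [Finset.mem_filter]
    constructor
    · rintro ⟨hr, hrs⟩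
      exact mem_of_subset_sup hF hP hC hr hrs
    · intro hr
      exact ⟨partsOf_block_subset hP hC hr, Finset.le_sup (f := id) hr⟩
  ext C
  rw [Finset.mem_union, Finset.mem_image]
  constructor
  · intro hC
    by_cases h2 : 2 ≤ C.card
    · exact Or.inl ⟨C.sup id, mem_bigOf.mpr ⟨C, hC, h2, rfl⟩, hfil C hC h2⟩
    · have hccard : C.card = 1 := by
        have := Finset.card_pos.mpr (partsOf_nonempty_block hP hC)
        omega
      obtain ⟨r, rfl⟩ := Finset.card_eq_one.mp hccard
      refine Or.inr (Finset.mem_image.mpr ⟨r, Finset.mem_filter.mpr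
        ⟨partsOf_block_subset hP hC (Finset.mem_singleton_self r), ?_⟩, rfl⟩)
      intro u hu hru
      obtain ⟨C', hC', h2', rfl⟩ := mem_bigOf.mp hu
      have hrC' : r ∈ C' := mem_of_subset_sup hF hP hC' (partsOf_block_subset hP hC
        (Finset.mem_singleton_self r)) hru
      have : ({r} : Finset (Finset ι)) = C' :=
        partsOf_eq_of_mem hP hC hC' (Finset.mem_singleton_self r) hrC'
      rw [← this, Finset.card_singleton] at h2'
      omega
  · rintro (⟨u, hu, rfl⟩ | hC)
    · obtain ⟨C', hC', h2', rfl⟩ := mem_bigOf.mp hu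
      rw [hfil C' hC' h2']
      exact hC'
    · obtain ⟨r, hr, rfl⟩ := Finset.mem_image.mp hC
      rw [Finset.mem_filter] at hr
      obtain ⟨C', hC', hrC'⟩ := partsOf_cover hP hr.1
      by_cases h2 : 2 ≤ C'.card
      · exact absurd (Finset.le_sup (f := id) hrC')
          (hr.2 (C'.sup id) (mem_bigOf.mpr ⟨C', hC', h2, rfl⟩))
      · have hccard : C'.card = 1 := by
          have := Finset.card_pos.mpr (partsOf_nonempty_block hP hC')
          omega
        obtain ⟨r', rfl⟩ := Finset.card_eq_one.mp hccard
        rw [Finset.mem_singleton] at hrC'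
        rw [hrC']
        exact hC'

/-- The "bad" vertices: minimal members of `G` that are not mixing. -/
def badOf (part : ι → Fin n) (G : Finset (Finset ι)) : Finset (Finset ι) :=
  G.filter fun s => (∀ t ∈ G, ¬ t ⊂ s) ∧ ∀ x ∈ s, ∀ y ∈ s, part x = part y

lemma mixing_sdiff_iff (hG : IsReducedForest (Finset.univ : Finset ι) G)
    (hS1 : S ⊆ G) (hS2 : S ⊆ rootsF Finset.univ G) (part : ι → Fin n) :
    IsMixingForest Finset.univ (G \ S) part ↔ badOf part G ⊆ S := by
  constructor
  · intro hmix s hs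
    rw [badOf, Finset.mem_filter] at hs
    by_contra hsS
    have hsGS : s ∈ G \ S := Finset.mem_sdiff.mpr ⟨hs.1, hsS⟩
    obtain ⟨x, hx, y, hy, hxy⟩ := hmix s hsGS
      (fun t ht => hs.2.1 t (Finset.mem_sdiff.mp ht).1)
    exact hxy (hs.2.2 x hx y hy)
  · intro hbad s hs hmin
    by_contra hcon
    push_neg at hcon
    have hminG : ∀ t ∈ G, ¬ t ⊂ s := by
      intro t ht hts
      by_cases htS : t ∈ S
      · exact (mem_rootsF.mp (hS2 htS)).2 s
          (mem_forestVerts_of_mem ((Finset.mem_sdiff.mp hs).1)) hts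
      · exact hmin t (Finset.mem_sdiff.mpr ⟨ht, htS⟩) hts
    have : s ∈ badOf part G :=
      Finset.mem_filter.mpr ⟨(Finset.mem_sdiff.mp hs).1, hminG, hcon⟩
    exact (Finset.mem_sdiff.mp hs).2 (hbad this)

lemma heightOne_char1 {part : ι → Fin n} (hG : G ∈ heightOne part) :
    G ∩ rootsF Finset.univ G = G ∧ badOf part G = G := by
  have hmem := (mem_heightOne.mp hG).1
  have hdisj := (mem_heightOne.mp hG).2
  have hGroots : G ⊆ rootsF Finset.univ G := by
    intro c hc
    rw [roots_heightOne hG]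
    exact Finset.mem_union_left _ hc
  constructor
  · exact Finset.inter_eq_left.mpr hGroots
  · refine le_antisymm (Finset.filter_subset _ _) fun s hs => ?_
    refine Finset.mem_filter.mpr ⟨hs, ?_, ?_⟩
    · intro t ht hts
      have hne : t ≠ s := by
        intro he; subst he; exact absurd hts (by simp [Finset.ssubset_def])
      obtain ⟨x, hx⟩ := Finset.card_pos.mp (show 0 < t.card by have := (hmem t ht).1; omega)
      exact Finset.disjoint_left.mp (hdisj t ht s hs hne) hx (hts.subset hx)
    · obtain ⟨i, hi⟩ := (hmem s hs).2
      intro x hx y hy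
      rw [mem_fib.mp (hi hx), mem_fib.mp (hi hy)]

lemma heightOne_char2 {part : ι → Fin n} (hG : IsReducedForest (Finset.univ : Finset ι) G)
    (h : G ∩ rootsF Finset.univ G = badOf part G) :
    G ∈ heightOne part ∧ badOf part G = G := by
  have hGbad : G ⊆ badOf part G := by
    intro s hs
    obtain ⟨v, hv, hsv⟩ := exists_root_sub hG (mem_forestVerts_of_mem hs)
    have hvG : v ∈ G := by
      rcases mem_forestVerts.mp (mem_rootsF.mp hv).1 with h' | ⟨x, rfl⟩
      · exact h'
      · have h2 := (hG.1 s hs).2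
        have := Finset.card_le_card hsv
        simp only [Finset.card_singleton] at this
        omega
    have hvbad : v ∈ badOf part G := by
      rw [← h]
      exact Finset.mem_inter.mpr ⟨hvG, hv⟩
    have hsmin := (Finset.mem_filter.mp hvbad).2.1
    have hsv' : s = v := by
      refine le_antisymm hsv ?_
      by_contra hcon
      exact hsmin s hs (lt_of_le_of_ne hsv (fun he => hcon (he ▸ le_rfl)))
    exact hsv' ▸ hvbad
  have hbadeq : badOf part G = G := le_antisymm (Finset.filter_subset _ _) hGbad
  refine ⟨mem_heightOne.mpr ⟨?_, ?_⟩, hbadeq⟩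
  · intro c hc
    refine ⟨(hG.1 c hc).2, ?_⟩
    have hsame := (Finset.mem_filter.mp (hGbad hc)).2.2
    obtain ⟨x₀, hx₀⟩ := Finset.card_pos.mp (show 0 < c.card by have := (hG.1 c hc).2; omega)
    exact ⟨part x₀, fun y hy => mem_fib.mpr (hsame y hy x₀ hx₀)⟩
  · intro c hc d hd hcd
    rcases hG.2 c hc d hd with h' | h' | h'
    · exact absurd (lt_of_le_of_ne h' hcd)
        ((Finset.mem_filter.mp (hGbad hd)).2.1 c hc)
    · exact absurd (lt_of_le_of_ne h' (Ne.symm hcd))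
        ((Finset.mem_filter.mp (hGbad hc)).2.1 d hd)
    · exact h'

end StepBPrep

section InnerSum

variable {ι : Type*} [Fintype ι] [DecidableEq ι] {n : ℕ}

open scoped Classical in
lemma innerSum (part : ι → Fin n) {G : Finset (Finset ι)}
    (hG : IsReducedForest (Finset.univ : Finset ι) G) :
    ∑ S ∈ Finset.univ.filter (fun S => S ⊆ G ∧ S ⊆ rootsF Finset.univ G ∧
        IsMixingForest Finset.univ (G \ S) part), ((-1 : ℤ) ^ (G \ S).card)
      = if G ∈ heightOne part then 1 else 0 := by
  classical
  set IR := G ∩ rootsF Finset.univ G with hIR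
  set Bad := badOf part G with hBad
  have hidx : (Finset.univ.filter (fun S => S ⊆ G ∧ S ⊆ rootsF Finset.univ G ∧
      IsMixingForest Finset.univ (G \ S) part) : Finset (Finset (Finset ι)))
      = IR.powerset.filter (fun S => Bad ⊆ S) := by
    ext S
    simp only [Finset.mem_filter, Finset.mem_univ, true_and, Finset.mem_powerset]
    constructor
    · rintro ⟨h1, h2, h3⟩
      exact ⟨Finset.subset_inter h1 h2, (mixing_sdiff_iff hG h1 h2 part).mp h3⟩
    · rintro ⟨h1, h2⟩
      have hs1 : S ⊆ G := h1.trans Finset.inter_subset_left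
      have hs2 : S ⊆ rootsF Finset.univ G := h1.trans Finset.inter_subset_right
      exact ⟨hs1, hs2, (mixing_sdiff_iff hG hs1 hs2 part).mpr h2⟩
  rw [hidx]
  by_cases hBadIR : Bad ⊆ IR
  case neg =>
    have hempty : IR.powerset.filter (fun S => Bad ⊆ S) = ∅ := by
      rw [Finset.filter_eq_empty_iff]
      intro S hS hcon
      exact hBadIR (hcon.trans (Finset.mem_powerset.mp hS))
    rw [hempty, Finset.sum_empty, if_neg]
    intro hH
    obtain ⟨e1, e2⟩ := heightOne_char1 hH
    rw [hIR, hBad, e1, e2] at hBadIR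
    exact hBadIR le_rfl
  case pos =>
  have hre : ∑ S ∈ IR.powerset.filter (fun S => Bad ⊆ S), ((-1:ℤ) ^ (G \ S).card)
      = ∑ S' ∈ (IR \ Bad).powerset, ((-1:ℤ) ^ ((G \ Bad) \ S').card) := by
    refine Finset.sum_nbij' (i := fun S => S \ Bad) (j := fun S' => Bad ∪ S') ?_ ?_ ?_ ?_ ?_
    · intro S hS
      rw [Finset.mem_filter, Finset.mem_powerset] at hS
      rw [Finset.mem_powerset]
      exact Finset.sdiff_subset_sdiff hS.1 le_rfl
    · intro S' hS'
      rw [Finset.mem_powerset] at hS'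
      rw [Finset.mem_filter, Finset.mem_powerset]
      exact ⟨Finset.union_subset hBadIR (hS'.trans Finset.sdiff_subset),
        Finset.subset_union_left⟩
    · intro S hS
      rw [Finset.mem_filter] at hS
      exact Finset.union_sdiff_of_subset hS.2
    · intro S' hS'
      rw [Finset.mem_powerset] at hS'
      have hdisj : Disjoint Bad S' := by
        rw [Finset.disjoint_left]
        intro t ht ht'
        exact (Finset.mem_sdiff.mp (hS' ht')).2 ht
      exact Finset.union_sdiff_cancel_left hdisj
    · intro S hS
      rw [Finset.mem_filter] at hS
      have he : G \ S = (G \ Bad) \ (S \ Bad) := by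
        ext t
        simp only [Finset.mem_sdiff]
        constructor
        · rintro ⟨htG, htS⟩
          exact ⟨⟨htG, fun hb => htS (hS.2 hb)⟩, fun hb => htS hb.1⟩
        · rintro ⟨⟨htG, htB⟩, hns⟩
          exact ⟨htG, fun htS => hns ⟨htS, htB⟩⟩
      rw [he]
  rw [hre]
  have hsplit : ∀ S' ∈ (IR \ Bad).powerset, ((-1:ℤ) ^ ((G \ Bad) \ S').card)
      = (-1)^((G \ Bad).card) * (-1)^S'.card := by
    intro S' hS'
    rw [Finset.mem_powerset] at hS'
    have hsub : S' ⊆ G \ Bad :=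
      hS'.trans (Finset.sdiff_subset_sdiff Finset.inter_subset_left le_rfl)
    rw [Finset.card_sdiff_of_subset hsub]
    have h2j : ((-1:ℤ)) ^ (S'.card + S'.card) = 1 := Even.neg_one_pow ⟨S'.card, rfl⟩
    calc ((-1:ℤ)) ^ ((G \ Bad).card - S'.card)
        = ((-1:ℤ)) ^ ((G \ Bad).card - S'.card) * ((-1:ℤ)) ^ (S'.card + S'.card) := by
          rw [h2j, mul_one]
      _ = ((-1:ℤ)) ^ ((G \ Bad).card - S'.card + (S'.card + S'.card)) := by rw [← pow_add]
      _ = ((-1:ℤ)) ^ ((G \ Bad).card + S'.card) := by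
          congr 1
          have := Finset.card_le_card hsub
          omega
      _ = _ := by rw [pow_add]
  rw [Finset.sum_congr rfl hsplit, ← Finset.mul_sum, Finset.sum_powerset_neg_one_pow_card]
  by_cases hEq : IR \ Bad = ∅
  · rw [if_pos hEq, mul_one]
    have hIRB : IR = Bad := le_antisymm (Finset.sdiff_eq_empty_iff_subset.mp hEq) hBadIR
    obtain ⟨hH1, hBadG'⟩ := heightOne_char2 hG hIRB
    rw [if_pos hH1, hBad, hBadG', Finset.sdiff_self, Finset.card_empty, pow_zero]
  · rw [if_neg hEq, mul_zero, if_neg]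
    intro hH
    obtain ⟨e1, e2⟩ := heightOne_char1 hH
    rw [hIR, hBad, e1, e2] at hEq
    exact hEq (Finset.sdiff_self G)

end InnerSum

section StepBMain

variable {R : Type*} {A : Type*} [CommRing R] [AddCommGroup A] [Module R A]
variable {ι : Type*} [Fintype ι] [DecidableEq ι] {n : ℕ}

open scoped Classical in
noncomputable def mixForests (part : ι → Fin n) : Finset (Finset (Finset ι)) :=
  Finset.univ.filter fun F => IsReducedForest Finset.univ F ∧
    IsMixingForest Finset.univ F part

lemma mem_mixForests {part : ι → Fin n} {F : Finset (Finset ι)} :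
    F ∈ mixForests part ↔ IsReducedForest (Finset.univ : Finset ι) F ∧
      IsMixingForest Finset.univ F part := by
  classical
  simp [mixForests]

lemma stepB (T : TwoMulAlg R A) {k : Multiset A → A} (hk : IsCumulant T k)
    (part : ι → Fin n) (a : ι → A) :
    ∑ F ∈ mixForests part, ((-1:ℤ) ^ F.card) • kappaForest T k Finset.univ F a
      = ∑ G ∈ heightOne part,
          T.dotProd (rootsF Finset.univ G) (kappaVert k Finset.univ G a) := by
  classical
  set vD : Finset (Finset ι) × Finset (Finset (Finset ι)) → A := fun q =>
    ((-1:ℤ) ^ q.1.card) • T.dotProd (rootsF Finset.univ (q.1 ∪ bigOf q.2))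
      (kappaVert k Finset.univ (q.1 ∪ bigOf q.2) a) with hvD
  set vE : Finset (Finset ι) × Finset (Finset ι) → A := fun q =>
    ((-1:ℤ) ^ ((q.1 \ q.2).card)) • T.dotProd (rootsF Finset.univ q.1)
      (kappaVert k Finset.univ q.1 a) with hvE
  have h1 : ∀ F ∈ mixForests part,
      ((-1:ℤ) ^ F.card) • kappaForest T k Finset.univ F a
        = ∑ P ∈ partsOf (rootsF Finset.univ F), vD (F, P) := by
    intro F hF
    rw [mem_mixForests] at hF
    have hexp : kappaForest T k Finset.univ F a
        = ∑ P ∈ partsOf (rootsF Finset.univ F),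
            T.dotProd P (fun C => k (Multiset.map (kappaVert k Finset.univ F a) C.val)) :=
      T.expand hk (rootsF Finset.univ F) (kappaVert k Finset.univ F a)
    rw [hexp, Finset.smul_sum]
    exact Finset.sum_congr rfl fun P hP => by rw [hvD, valueB2 T hk a hF.1 hP]
  rw [Finset.sum_congr rfl h1]
  set D := (Finset.univ :
      Finset (Finset (Finset ι) × Finset (Finset (Finset ι)))).filter
      (fun q => q.1 ∈ mixForests part ∧ q.2 ∈ partsOf (rootsF Finset.univ q.1)) with hD
  have hDmem : ∀ q, q ∈ D ↔ q.1 ∈ mixForests part ∧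
      q.2 ∈ partsOf (rootsF Finset.univ q.1) := by
    intro q
    rw [hD, Finset.mem_filter]
    simp
  have hDsum : ∑ q ∈ D, vD q = ∑ F ∈ mixForests part,
      ∑ P ∈ partsOf (rootsF Finset.univ F), vD (F, P) :=
    Finset.sum_finset_product D (mixForests part)
      (fun F => partsOf (rootsF Finset.univ F)) hDmem
  rw [← hDsum]
  set E := (Finset.univ : Finset (Finset (Finset ι) × Finset (Finset ι))).filter
      (fun q => IsReducedForest (Finset.univ : Finset ι) q.1 ∧ q.2 ⊆ q.1 ∧
        q.2 ⊆ rootsF Finset.univ q.1 ∧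
        IsMixingForest Finset.univ (q.1 \ q.2) part) with hE
  have hEmem : ∀ q : Finset (Finset ι) × Finset (Finset ι), q ∈ E ↔
      IsReducedForest (Finset.univ : Finset ι) q.1 ∧ q.2 ⊆ q.1 ∧
      q.2 ⊆ rootsF Finset.univ q.1 ∧
      IsMixingForest Finset.univ (q.1 \ q.2) part := by
    intro q
    rw [hE, Finset.mem_filter]
    simp
  have hbij : ∑ q ∈ D, vD q = ∑ q ∈ E, vE q := by
    refine Finset.sum_bij (i := fun q _ => (q.1 ∪ bigOf q.2, bigOf q.2)) ?_ ?_ ?_ ?_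
    · intro q hq
      obtain ⟨hq1, hq2⟩ := (hDmem q).mp hq
      rw [mem_mixForests] at hq1
      rw [hEmem]
      refine ⟨reduced_union hq1.1 hq2, Finset.subset_union_right, ?_, ?_⟩
      · rw [rootsF_union hq1.1 hq2]
        intro u hu
        obtain ⟨C, hC, h2, rfl⟩ := mem_bigOf.mp hu
        exact Finset.mem_image_of_mem _ hC
      · rw [show (q.1 ∪ bigOf q.2, bigOf q.2).1 \ (q.1 ∪ bigOf q.2, bigOf q.2).2
            = q.1 from union_sdiff_bigOf hq1.1 hq2]
        exact hq1.2
    · intro q₁ hq₁ q₂ hq₂ heq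
      obtain ⟨h11, h12⟩ := (hDmem q₁).mp hq₁
      obtain ⟨h21, h22⟩ := (hDmem q₂).mp hq₂
      rw [mem_mixForests] at h11 h21
      have hS : bigOf q₁.2 = bigOf q₂.2 := congrArg Prod.snd heq
      have hGu : q₁.1 ∪ bigOf q₁.2 = q₂.1 ∪ bigOf q₂.2 := congrArg Prod.fst heq
      have hF : q₁.1 = q₂.1 := by
        have e1 := union_sdiff_bigOf h11.1 h12
        have e2 := union_sdiff_bigOf h21.1 h22
        rw [← e1, ← e2, hGu, hS]
      have hroots : rootsF Finset.univ q₁.1 = rootsF Finset.univ q₂.1 := by rw [hF]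
      have hP : q₁.2 = q₂.2 := by
        rw [P_determined h11.1 h12, P_determined h21.1 h22, hS, hroots]
      exact Prod.ext hF hP
    · intro q hq
      obtain ⟨hred, hS1, hS2, hmix⟩ := (hEmem q).mp hq
      have hredF : IsReducedForest (Finset.univ : Finset ι) (q.1 \ q.2) :=
        reduced_subset Finset.sdiff_subset hred
      refine ⟨(q.1 \ q.2, Pof q.1 q.2), ?_, ?_⟩
      · rw [hDmem]
        exact ⟨mem_mixForests.mpr ⟨hredF, hmix⟩, Pof_mem_partsOf hred hS1 hS2⟩
      · have hb : bigOf (Pof q.1 q.2) = q.2 := bigOf_Pof hred hS1 hS2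
        have hu : (q.1 \ q.2) ∪ q.2 = q.1 := Finset.sdiff_union_of_subset hS1
        show ((q.1 \ q.2) ∪ bigOf (Pof q.1 q.2), bigOf (Pof q.1 q.2)) = q
        rw [hb, hu]
    · intro q hq
      obtain ⟨hq1, hq2⟩ := (hDmem q).mp hq
      rw [mem_mixForests] at hq1
      show ((-1:ℤ) ^ q.1.card) • T.dotProd (rootsF Finset.univ (q.1 ∪ bigOf q.2))
          (kappaVert k Finset.univ (q.1 ∪ bigOf q.2) a)
        = ((-1:ℤ) ^ (((q.1 ∪ bigOf q.2) \ bigOf q.2).card)) •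
          T.dotProd (rootsF Finset.univ (q.1 ∪ bigOf q.2))
            (kappaVert k Finset.univ (q.1 ∪ bigOf q.2) a)
      rw [union_sdiff_bigOf hq1.1 hq2]
  rw [hbij]
  have hEsum : ∑ q ∈ E, vE q = ∑ G ∈ Finset.univ.filter
      (fun G => IsReducedForest (Finset.univ : Finset ι) G),
      ∑ S ∈ Finset.univ.filter (fun S => S ⊆ G ∧ S ⊆ rootsF Finset.univ G ∧
        IsMixingForest Finset.univ (G \ S) part), vE (G, S) := by
    refine Finset.sum_finset_product E _ _ ?_
    intro q
    rw [hEmem]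
    simp only [Finset.mem_filter, Finset.mem_univ, true_and]
  rw [hEsum]
  have hinner : ∀ G ∈ Finset.univ.filter
      (fun G => IsReducedForest (Finset.univ : Finset ι) G),
      ∑ S ∈ Finset.univ.filter (fun S => S ⊆ G ∧ S ⊆ rootsF Finset.univ G ∧
        IsMixingForest Finset.univ (G \ S) part), vE (G, S)
      = if G ∈ heightOne part then
          T.dotProd (rootsF Finset.univ G) (kappaVert k Finset.univ G a) else 0 := by
    intro G hG
    rw [Finset.mem_filter] at hG
    have : ∑ S ∈ Finset.univ.filter (fun S => S ⊆ G ∧ S ⊆ rootsF Finset.univ G ∧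
        IsMixingForest Finset.univ (G \ S) part), vE (G, S)
        = (∑ S ∈ Finset.univ.filter (fun S => S ⊆ G ∧ S ⊆ rootsF Finset.univ G ∧
            IsMixingForest Finset.univ (G \ S) part), ((-1:ℤ) ^ (G \ S).card)) •
          T.dotProd (rootsF Finset.univ G) (kappaVert k Finset.univ G a) := by
      rw [Finset.sum_smul]
    rw [this, innerSum part hG.2]
    by_cases hH : G ∈ heightOne part
    · rw [if_pos hH, if_pos hH, one_smul]
    · rw [if_neg hH, if_neg hH, zero_smul]
  rw [Finset.sum_congr rfl hinner, ← Finset.sum_filter]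
  congr 1
  ext G
  simp only [Finset.mem_filter, Finset.mem_univ, true_and]
  exact ⟨fun h => h.2, fun h => ⟨heightOne_reduced h, h⟩⟩

end StepBMain

section Statements

variable {R : Type*} {A : Type*} [CommRing R] [AddCommGroup A] [Module R A]
variable {ι : Type*} [Fintype ι] [DecidableEq ι] {n : ℕ}

theorem stmt0 (T : TwoMulAlg R A) (k : Multiset A → A) (hk : IsCumulant T k)
    (part : ι → Fin n) (a : ι → A) :
    T.dotProd (Finset.univ : Finset (Fin n))
        (fun i => T.starProd (Finset.univ.filter fun x => part x = i) a) =
      ∑ᶠ F ∈ {F : Finset (Finset ι) |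
          IsReducedForest Finset.univ F ∧ IsMixingForest Finset.univ F part},
        ((-1 : ℤ) ^ F.card) • kappaForest T k Finset.univ F a := by
  classical
  have hset : {F : Finset (Finset ι) |
      IsReducedForest Finset.univ F ∧ IsMixingForest Finset.univ F part}
      = ↑(mixForests part) := by
    ext F
    simp [mem_mixForests]
  rw [hset, finsum_mem_coe_finset, stepB T hk part a]
  exact stepA T hk part a

end Statements
end

section
/- Suppose deg : 𝒜 → ℤ satisfies deg(x ∗ y) ≤ deg x + deg y for all x, y ∈ 𝒜, together with the approximate factorization property: deg κ(a_1,…,a_l) ≤ deg a_1 + ⋯ + deg a_l − 2(l−1) for all l ≥ 1 and all a_1,…,a_l ∈ 𝒜. Let A be a finite indexed multiset of elements of 𝒜. Then for any reduced forest F ∈ F̂(A) consisting of f trees, deg κ_F ≤ (Σ_{a ∈ A} deg a) − 2|A| + 2f, where |A| is the number of elements of A. -/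
open Finset

section ProofAux

variable {R : Type*} {A : Type*} [CommRing R] [AddCommGroup A] [Module R A]
variable {ι : Type*} [DecidableEq ι]

lemma deg_starProd (T : TwoMulAlg R A) (deg : A → ℤ)
    (hstar : ∀ x y : A, deg (T.star x y) ≤ deg x + deg y)
    {κ : Type*} {s : Finset κ} (hs : s.Nonempty) (f : κ → A) :
    deg (T.starProd s f) ≤ ∑ i ∈ s, deg (f i) := by
  induction hs using Finset.Nonempty.cons_induction with
  | singleton a => simp [TwoMulAlg.starProd, T.star_one]
  | cons a s ha hs ih =>
    simp only [TwoMulAlg.starProd] at ih ⊢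
    rw [@Finset.fold_cons _ _ T.star ⟨T.star_comm⟩ ⟨T.star_assoc⟩ f T.one s a ha,
      Finset.sum_cons]
    exact le_trans (hstar _ _) (by linarith)

lemma verts_laminar {b : Finset ι} {F : Finset (Finset ι)} (hF : IsReducedForest b F)
    {u v : Finset ι} (hu : u ∈ forestVerts b F) (hv : v ∈ forestVerts b F) :
    u ⊆ v ∨ v ⊆ u ∨ Disjoint u v := by
  unfold forestVerts at hu hv
  rcases Finset.mem_union.mp hu with hu | hu <;> rcases Finset.mem_union.mp hv with hv | hv
  · exact hF.2 u hu v hv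
  · obtain ⟨y, -, rfl⟩ := Finset.mem_image.mp hv
    by_cases h : y ∈ u
    · right; left; simpa
    · right; right; simp [Finset.disjoint_singleton_right, h]
  · obtain ⟨y, -, rfl⟩ := Finset.mem_image.mp hu
    by_cases h : y ∈ v
    · left; simpa
    · right; right; simp [Finset.disjoint_singleton_left, h]
  · obtain ⟨y, -, rfl⟩ := Finset.mem_image.mp hu
    obtain ⟨z, -, rfl⟩ := Finset.mem_image.mp hv
    by_cases h : y = z
    · left; simp [h]
    · right; right
      rw [Finset.disjoint_singleton_left, Finset.mem_singleton]
      exact h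

lemma singleton_mem_verts {b : Finset ι} {F : Finset (Finset ι)} {x : ι} (hx : x ∈ b) :
    ({x} : Finset ι) ∈ forestVerts b F :=
  Finset.mem_union.mpr (Or.inr (Finset.mem_image.mpr ⟨x, hx, rfl⟩))

lemma exists_root_mem {b : Finset ι} {F : Finset (Finset ι)} {x : ι} (hx : x ∈ b) :
    ∃ r ∈ rootsF b F, x ∈ r := by
  classical
  set S := (forestVerts b F).filter (fun u => x ∈ u) with hSdef
  have hS : S.Nonempty := ⟨{x}, Finset.mem_filter.mpr ⟨singleton_mem_verts hx, by simp⟩⟩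
  obtain ⟨t, ht, hmax⟩ := S.exists_max_image Finset.card hS
  obtain ⟨htv, htx⟩ := Finset.mem_filter.mp ht
  refine ⟨t, Finset.mem_filter.mpr ⟨htv, fun u hu hsub => ?_⟩, htx⟩
  have huS : u ∈ S := Finset.mem_filter.mpr ⟨hu, hsub.subset htx⟩
  exact absurd (hmax u huS) (not_le.mpr (Finset.card_lt_card hsub))

lemma mem_forestVerts_of_mem_rootsF {b : Finset ι} {F : Finset (Finset ι)} {r : Finset ι}
    (hr : r ∈ rootsF b F) : r ∈ forestVerts b F := by
  unfold rootsF at hr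
  exact Finset.mem_of_mem_filter _ hr

lemma roots_disjoint_s4 {b : Finset ι} {F : Finset (Finset ι)} (hF : IsReducedForest b F) :
    (↑(rootsF b F) : Set (Finset ι)).PairwiseDisjoint id := by
  intro r1 h1 r2 h2 hne
  rw [Finset.mem_coe, rootsF, Finset.mem_filter] at h1 h2
  rcases verts_laminar hF h1.1 h2.1 with h | h | h
  · exact absurd (h.ssubset_of_ne hne) (h1.2 r2 h2.1)
  · exact absurd (h.ssubset_of_ne (Ne.symm hne)) (h2.2 r1 h1.1)
  · exact h

lemma mem_verts_of_mem_children {b : Finset ι} {F : Finset (Finset ι)} {s t : Finset ι}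
    (ht : t ∈ childrenF b F s) : t ∈ forestVerts b F := (Finset.mem_filter.mp ht).1

lemma ssubset_of_mem_children {b : Finset ι} {F : Finset (Finset ι)} {s t : Finset ι}
    (ht : t ∈ childrenF b F s) : t ⊂ s := (Finset.mem_filter.mp ht).2.1

lemma exists_child_mem {b : Finset ι} {F : Finset (Finset ι)} (hF : IsReducedForest b F)
    {s : Finset ι} (hsF : s ∈ F) {x : ι} (hx : x ∈ s) :
    ∃ t ∈ childrenF b F s, x ∈ t := by
  classical
  have hsb : s ⊆ b := (hF.1 s hsF).1
  have hs2 : 2 ≤ s.card := (hF.1 s hsF).2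
  have hxs : ({x} : Finset ι) ⊂ s := by
    refine (Finset.singleton_subset_iff.mpr hx).ssubset_of_ne ?_
    intro h
    rw [← h] at hs2
    simp at hs2
  set S := (forestVerts b F).filter (fun u => x ∈ u ∧ u ⊂ s) with hSdef
  have hS : S.Nonempty :=
    ⟨{x}, Finset.mem_filter.mpr ⟨singleton_mem_verts (hsb hx), by simp, hxs⟩⟩
  obtain ⟨t, ht, hmax⟩ := S.exists_max_image Finset.card hS
  obtain ⟨htv, htx, hts⟩ := Finset.mem_filter.mp ht
  refine ⟨t, Finset.mem_filter.mpr ⟨htv, hts, fun u hu ⟨htu, hus⟩ => ?_⟩, htx⟩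
  have huS : u ∈ S := Finset.mem_filter.mpr ⟨hu, htu.subset htx, hus⟩
  exact absurd (hmax u huS) (not_le.mpr (Finset.card_lt_card htu))

lemma children_disjoint_s4 {b : Finset ι} {F : Finset (Finset ι)} (hF : IsReducedForest b F)
    (s : Finset ι) : (↑(childrenF b F s) : Set (Finset ι)).PairwiseDisjoint id := by
  intro t1 h1 t2 h2 hne
  rw [Finset.mem_coe, childrenF, Finset.mem_filter] at h1 h2
  rcases verts_laminar hF h1.1 h2.1 with h | h | h
  · exact absurd ⟨h.ssubset_of_ne hne, h2.2.1⟩ (h1.2.2 t2 h2.1)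
  · exact absurd ⟨h.ssubset_of_ne (Ne.symm hne), h1.2.1⟩ (h2.2.2 t1 h1.1)
  · exact h

lemma children_biUnion {b : Finset ι} {F : Finset (Finset ι)} (hF : IsReducedForest b F)
    {s : Finset ι} (hsF : s ∈ F) : (childrenF b F s).biUnion id = s := by
  apply Finset.Subset.antisymm
  · intro x hx
    obtain ⟨t, htC, hxt⟩ := Finset.mem_biUnion.mp hx
    exact (ssubset_of_mem_children htC).subset hxt
  · intro x hx
    obtain ⟨t, htC, hxt⟩ := exists_child_mem hF hsF hx
    exact Finset.mem_biUnion.mpr ⟨t, htC, hxt⟩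

lemma deg_kappaVert [Fintype ι] {F : Finset (Finset ι)}
    (hF : IsReducedForest Finset.univ F)
    (k : Multiset A → A) (a : ι → A) (deg : A → ℤ)
    (hafp : ∀ m : Multiset A, m ≠ 0 →
      deg (k m) ≤ (m.map deg).sum - 2 * ((m.card : ℤ) - 1)) :
    ∀ s : Finset ι, s ∈ forestVerts Finset.univ F →
      deg (kappaVert k Finset.univ F a s) ≤
        (∑ x ∈ s, deg (a x)) - 2 * ((s.card : ℤ) - 1) := by
  intro s
  induction s using Finset.strongInduction with
  | _ s ih =>
    intro hs
    rw [kappaVert]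
    split_ifs with h
    · have hspec := (Finset.card_eq_one.mp h).choose_spec
      have h1 : ∑ x ∈ s, deg (a x) = deg (a (Finset.card_eq_one.mp h).choose) := by
        conv_lhs => rw [hspec]
        rw [Finset.sum_singleton]
      have h2 : (s.card : ℤ) = 1 := by exact_mod_cast h
      rw [h1, h2]
      simp
    · have hsF : s ∈ F := by
        rcases Finset.mem_union.mp hs with h' | h'
        · exact h'
        · obtain ⟨y, -, rfl⟩ := Finset.mem_image.mp h'
          simp at h
      set C := childrenF Finset.univ F s with hCdef
      have hbi : C.biUnion id = s := children_biUnion hF hsF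
      have hdisj := children_disjoint_s4 hF (b := Finset.univ) s
      have hs2 : 2 ≤ s.card := (hF.1 s hsF).2
      have hCne : C.Nonempty := by
        have hxs : s.Nonempty := Finset.card_pos.mp (by omega)
        obtain ⟨x, hx⟩ := hxs
        obtain ⟨t, htC, -⟩ := exists_child_mem hF hsF hx
        exact ⟨t, htC⟩
      have hsum : ∑ x ∈ s, deg (a x) = ∑ t ∈ C, ∑ x ∈ t, deg (a x) := by
        rw [← hbi, Finset.sum_biUnion hdisj]
        rfl
      have hcard : s.card = ∑ t ∈ C, t.card := by
        rw [← hbi, Finset.card_biUnion]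
        · rfl
        · intro x hx y hy hxy
          exact hdisj hx hy hxy
      set m := Multiset.map (fun t : {t // t ∈ C} => kappaVert k Finset.univ F a t.1)
        C.attach.val with hmdef
      have hmne : m ≠ 0 := by
        simp only [hmdef, Ne, Multiset.map_eq_zero, Finset.val_eq_zero]
        exact (Finset.attach_nonempty_iff.mpr hCne).ne_empty
      have hmcard : m.card = C.card := by
        rw [hmdef, Multiset.card_map]
        exact Finset.card_attach
      have hmsum : (m.map deg).sum =
          ∑ t ∈ C, deg (kappaVert k Finset.univ F a t) := by
        rw [hmdef, Multiset.map_map]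
        rw [← Finset.sum_attach C (fun t => deg (kappaVert k Finset.univ F a t))]
        rfl
      have hkey := hafp m hmne
      rw [hmsum, hmcard] at hkey
      have hIH : ∑ t ∈ C, deg (kappaVert k Finset.univ F a t) ≤
          ∑ t ∈ C, ((∑ x ∈ t, deg (a x)) - 2 * ((t.card : ℤ) - 1)) := by
        apply Finset.sum_le_sum
        intro t htC
        exact ih t (ssubset_of_mem_children htC) (mem_verts_of_mem_children htC)
      have hcardZ : (s.card : ℤ) = ∑ t ∈ C, (t.card : ℤ) := by
        rw [hcard]
        push_cast
        rfl
      have hexp : ∑ t ∈ C, ((∑ x ∈ t, deg (a x)) - 2 * ((t.card : ℤ) - 1)) =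
          (∑ x ∈ s, deg (a x)) - 2 * (s.card : ℤ) + 2 * (C.card : ℤ) := by
        rw [Finset.sum_sub_distrib, ← hsum, hcardZ, Finset.mul_sum]
        simp only [mul_sub, mul_one, Finset.sum_sub_distrib, Finset.sum_const,
          nsmul_eq_mul]
        push_cast
        ring
      refine le_trans hkey ?_
      rw [hexp] at hIH
      linarith

end ProofAux

section Statements

variable {R : Type*} {A : Type*} [CommRing R] [AddCommGroup A] [Module R A]
variable {ι : Type*} [Fintype ι] [DecidableEq ι] {n : ℕ}

theorem stmt4 [Nonempty ι] (T : TwoMulAlg R A) (k : Multiset A → A) (hk : IsCumulant T k)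
    (a : ι → A) (deg : A → ℤ)
    (hstar : ∀ x y : A, deg (T.star x y) ≤ deg x + deg y)
    (hafp : ∀ m : Multiset A, m ≠ 0 →
      deg (k m) ≤ (m.map deg).sum - 2 * ((m.card : ℤ) - 1))
    (F : Finset (Finset ι)) (hF : IsReducedForest Finset.univ F) :
    deg (kappaForest T k Finset.univ F a) ≤
      (∑ x : ι, deg (a x)) - 2 * (Fintype.card ι : ℤ) + 2 * ((rootsF Finset.univ F).card : ℤ) := by
  classical
  have hroots_ne : (rootsF (Finset.univ : Finset ι) F).Nonempty := by
    obtain ⟨x⟩ := (inferInstance : Nonempty ι)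
    obtain ⟨r, hr, -⟩ := exists_root_mem (F := F) (Finset.mem_univ x)
    exact ⟨r, hr⟩
  have hdisj := roots_disjoint_s4 (b := (Finset.univ : Finset ι)) (F := F) hF
  have hbi : (rootsF (Finset.univ : Finset ι) F).biUnion id = Finset.univ := by
    apply Finset.Subset.antisymm (Finset.subset_univ _)
    intro x _
    obtain ⟨r, hr, hxr⟩ := exists_root_mem (F := F) (Finset.mem_univ x)
    exact Finset.mem_biUnion.mpr ⟨r, hr, hxr⟩
  have h1 : deg (kappaForest T k Finset.univ F a) ≤
      ∑ r ∈ rootsF Finset.univ F, deg (kappaVert k Finset.univ F a r) :=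
    deg_starProd T deg hstar hroots_ne _
  have h2 : ∀ r ∈ rootsF Finset.univ F,
      deg (kappaVert k Finset.univ F a r) ≤
        (∑ x ∈ r, deg (a x)) - 2 * ((r.card : ℤ) - 1) := by
    intro r hr
    have hrv : r ∈ forestVerts Finset.univ F := mem_forestVerts_of_mem_rootsF hr
    exact deg_kappaVert hF k a deg hafp r hrv
  have h3 := Finset.sum_le_sum h2
  have hsum : ∑ x : ι, deg (a x) = ∑ r ∈ rootsF Finset.univ F, ∑ x ∈ r, deg (a x) := by
    have h := Finset.sum_biUnion (f := fun x => deg (a x)) (s := rootsF Finset.univ F)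
      (t := id) hdisj
    rw [hbi] at h
    exact h
  have hcardZ : (Fintype.card ι : ℤ) = ∑ r ∈ rootsF Finset.univ F, (r.card : ℤ) := by
    have h := Finset.card_biUnion (s := rootsF Finset.univ F) (t := id)
      (fun x hx y hy hxy => hdisj hx hy hxy)
    rw [hbi] at h
    rw [← Finset.card_univ, h]
    push_cast
    rfl
  have hexp : ∑ r ∈ rootsF Finset.univ F, ((∑ x ∈ r, deg (a x)) - 2 * ((r.card : ℤ) - 1)) =
      (∑ x : ι, deg (a x)) - 2 * (Fintype.card ι : ℤ) +
        2 * ((rootsF Finset.univ F).card : ℤ) := by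
    rw [Finset.sum_sub_distrib, ← hsum, hcardZ, Finset.mul_sum]
    simp only [mul_sub, mul_one, Finset.sum_sub_distrib, Finset.sum_const, nsmul_eq_mul]
    push_cast
    ring
  rw [hexp] at h3
  linarith


end Statements
end

section
/- Let A_1,…,A_n be finite multisets of elements of 𝒜, with A_i = {a_1^i,…,a_{k_i}^i}, and let A = A_1 ∪ ⋯ ∪ A_n be their indexed multiset union. Then (a_1^1 ∗ ⋯ ∗ a_{k_1}^1) · ⋯ · (a_1^n ∗ ⋯ ∗ a_{k_n}^n) = (a_1^1 ∗ ⋯ ∗ a_{k_1}^1) ∗ ⋯ ∗ (a_1^n ∗ ⋯ ∗ a_{k_n}^n) − Σ_{ν mixing} κ_ν, where the sum runs over all mixing set partitions ν of A for the division A = A_1 ∪ ⋯ ∪ A_n. -/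
open Finset

section AuxDot
variable {R : Type*} {A : Type*} [CommRing R] [AddCommGroup A] [Module R A]

/-- Type synonym carrying the `dot` multiplication of `T` as a ring structure. -/
def DotType (_T : TwoMulAlg R A) : Type _ := A

variable (T : TwoMulAlg R A)

instance : AddCommGroup (DotType T) := inferInstanceAs (AddCommGroup A)

instance : CommRing (DotType T) where
  __ := (inferInstance : AddCommGroup (DotType T))
  mul := T.dot
  one := T.one
  mul_comm := T.dot_comm
  mul_assoc := T.dot_assoc
  mul_one := T.dot_one
  one_mul x := (T.dot_comm _ _).trans (T.dot_one x)
  right_distrib := T.dot_add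
  left_distrib x y z := by
    show T.dot x (y + z) = T.dot x y + T.dot x z
    exact (T.dot_comm x (y + z)).trans ((T.dot_add y z x).trans
      (congrArg₂ (· + ·) (T.dot_comm y x) (T.dot_comm z x)))
  zero_mul x := by
    have h := T.dot_add 0 0 x
    rw [add_zero] at h
    exact (add_eq_left.mp h.symm)
  mul_zero x := by
    show T.dot x 0 = 0
    have h := T.dot_add 0 0 x
    rw [add_zero] at h
    exact (T.dot_comm x 0).trans (add_eq_left.mp h.symm)

def toDot : A → DotType T := fun x => x
def ofDot : DotType T → A := fun x => x

lemma dotProd_eq {ι : Type*} (s : Finset ι) (f : ι → A) :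
    T.dotProd s f = ofDot T (∏ x ∈ s, toDot T (f x)) := by
  rw [Finset.prod_eq_fold]; rfl

lemma starProd_eq {ι : Type*} (s : Finset ι) (f : ι → A) :
    T.starProd s f = ofDot T.swap (∏ x ∈ s, toDot T.swap (f x)) := by
  rw [Finset.prod_eq_fold]; rfl

lemma ofDot_sum {ι : Type*} (s : Finset ι) (f : ι → DotType T) :
    ofDot T (∑ x ∈ s, f x) = ∑ x ∈ s, ofDot T (f x) := rfl

lemma toDot_sum {ι : Type*} (s : Finset ι) (f : ι → A) :
    toDot T (∑ x ∈ s, f x) = ∑ x ∈ s, toDot T (f x) := rfl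

end AuxDot

section AuxPart
variable {ι : Type*} [DecidableEq ι]

/-- Transport of a partition of `univ : Finset (Fin m)` along an embedding with image `b`. -/
def embPart {m : ℕ} (emb : Fin m ↪ ι) {b : Finset ι} (hb : Finset.univ.map emb = b)
    (ν : Finpartition (Finset.univ : Finset (Fin m))) : Finpartition b where
  parts := ν.parts.image (Finset.map emb)
  supIndep := by
    rw [Finset.supIndep_iff_pairwiseDisjoint]
    intro x hx y hy hxy
    simp only [Finset.coe_image, Set.mem_image, Finset.mem_coe] at hx hy
    obtain ⟨c, hc, rfl⟩ := hx
    obtain ⟨d, hd, rfl⟩ := hy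
    have hcd : c ≠ d := fun h => hxy (by rw [h])
    exact (Finset.disjoint_map emb).mpr (ν.disjoint hc hd hcd)
  sup_parts := by
    ext x
    simp only [Finset.mem_sup, Finset.mem_image, ← hb, Finset.mem_map, id]
    constructor
    · rintro ⟨t, ⟨c, hc, rfl⟩, hx⟩
      rw [Finset.mem_map] at hx
      obtain ⟨j, _, rfl⟩ := hx
      exact ⟨j, Finset.mem_univ _, rfl⟩
    · rintro ⟨j, -, rfl⟩
      have : j ∈ ν.parts.sup id := by rw [ν.sup_parts]; exact Finset.mem_univ _
      rw [Finset.mem_sup] at this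
      obtain ⟨c, hc, hj⟩ := this
      exact ⟨c.map emb, ⟨c, hc, rfl⟩, Finset.mem_map_of_mem _ hj⟩
  bot_notMem := by
    simp only [Finset.bot_eq_empty, Finset.mem_image]
    rintro ⟨c, hc, h⟩
    rw [Finset.map_eq_empty] at h
    exact ν.bot_notMem (by simpa [h] using hc)

lemma embPart_bijective {m : ℕ} (emb : Fin m ↪ ι) {b : Finset ι}
    (hb : Finset.univ.map emb = b) : Function.Bijective (embPart emb hb) := by
  constructor
  · intro ν μ h
    have h' : ν.parts.image (Finset.map emb) = μ.parts.image (Finset.map emb) :=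
      congrArg Finpartition.parts h
    have := Finset.image_injective (Finset.map_injective emb) h'
    ext c
    rw [this]
  · intro μ
    classical
    set pre : Finset ι → Finset (Fin m) := fun d => Finset.univ.filter (emb · ∈ d) with hpre
    have key : ∀ d ⊆ b, (pre d).map emb = d := by
      intro d hd
      ext x
      simp only [hpre, Finset.mem_map, Finset.mem_filter, Finset.mem_univ, true_and]
      constructor
      · rintro ⟨j, hj, rfl⟩; exact hj
      · intro hx
        have : x ∈ Finset.univ.map emb := hb ▸ hd hx
        rw [Finset.mem_map] at this
        obtain ⟨j, -, rfl⟩ := this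
        exact ⟨j, hx, rfl⟩
    refine ⟨⟨μ.parts.image pre, ?_, ?_, ?_⟩, ?_⟩
    · rw [Finset.supIndep_iff_pairwiseDisjoint]
      intro x hx y hy hxy
      simp only [Finset.coe_image, Set.mem_image, Finset.mem_coe] at hx hy
      obtain ⟨c, hc, rfl⟩ := hx
      obtain ⟨d, hd, rfl⟩ := hy
      have hcd : c ≠ d := fun h => hxy (by rw [h])
      have hdisj := μ.disjoint hc hd hcd
      simp only [Function.onFun, id] at hdisj ⊢
      rw [Finset.disjoint_left] at hdisj ⊢
      intro j hj hj'
      simp only [hpre, Finset.mem_filter] at hj hj'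
      exact hdisj hj.2 hj'.2
    · rw [Finset.eq_univ_iff_forall]
      intro j
      have : emb j ∈ b := by
        rw [← hb]; exact Finset.mem_map_of_mem _ (Finset.mem_univ _)
      rw [← μ.sup_parts, Finset.mem_sup] at this
      obtain ⟨d, hd, hjd⟩ := this
      rw [Finset.mem_sup]
      refine ⟨pre d, Finset.mem_image_of_mem _ hd, ?_⟩
      simp only [hpre, Finset.mem_filter, Finset.mem_univ, true_and]
      simpa using hjd
    · simp only [Finset.bot_eq_empty, Finset.mem_image]
      rintro ⟨d, hd, h⟩
      have : (pre d).map emb = d := key d (μ.le hd)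
      rw [h, Finset.map_empty] at this
      obtain ⟨x, hx⟩ := μ.nonempty_of_mem_parts hd
      rw [← this] at hx
      exact absurd hx (Finset.notMem_empty _)
    · apply Finpartition.ext
      show (Finset.image pre μ.parts).image (Finset.map emb) = μ.parts
      rw [Finset.image_image]
      ext c
      constructor
      · rintro h
        rw [Finset.mem_image] at h
        obtain ⟨d, hd, rfl⟩ := h
        simpa [Function.comp, key d (μ.le hd)] using hd
      · intro hc
        rw [Finset.mem_image]
        exact ⟨c, hc, by simp [Function.comp, key c (μ.le hc)]⟩

end AuxPart

section AuxMC
variable {R : Type*} {A : Type*} [CommRing R] [AddCommGroup A] [Module R A]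

@[simp] lemma toDot_ofDot (T : TwoMulAlg R A) (x : DotType T) : toDot T (ofDot T x) = x := rfl

lemma mc_finset {ι : Type*} [DecidableEq ι] (T : TwoMulAlg R A) (k : Multiset A → A)
    (hk : IsCumulant T k) (b : Finset ι) (a : ι → A) :
    T.starProd b a =
      ∑ ν : Finpartition b, T.dotProd ν.parts (fun c => k (Multiset.map a c.val)) := by
  classical
  set m := b.card with hm
  let e := b.equivFin
  let emb : Fin m ↪ ι := ⟨fun j => (e.symm j : ι), by
    intro x y h
    exact e.symm.injective (Subtype.coe_injective h)⟩
  have hmem : ∀ j, emb j ∈ b := fun j => (e.symm j).2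
  have hb : Finset.univ.map emb = b := by
    apply Finset.eq_of_subset_of_card_le
    · intro x hx
      rw [Finset.mem_map] at hx
      obtain ⟨j, -, rfl⟩ := hx
      exact hmem j
    · rw [Finset.card_map, Finset.card_univ, Fintype.card_fin]
  have h1 : T.starProd b a = T.starProd Finset.univ (a ∘ emb) := by
    rw [starProd_eq, starProd_eq]
    show ofDot T.swap (∏ x ∈ b, toDot T.swap (a x)) = _
    rw [← hb, Finset.prod_map]
    rfl
  have h2 := hk.2 m (a ∘ emb)
  rw [finsum_eq_sum_of_fintype] at h2
  rw [h1, h2]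
  apply Fintype.sum_bijective (embPart emb hb) (embPart_bijective emb hb)
  intro ν
  show T.dotProd ν.parts _ = T.dotProd (ν.parts.image (Finset.map emb)) _
  rw [dotProd_eq, dotProd_eq, Finset.prod_image
    (fun x _ y _ h => Finset.map_injective emb h)]
  apply congrArg
  apply Finset.prod_congr rfl
  intro c hc
  apply congrArg (toDot T)
  apply congrArg k
  show Multiset.map (a ∘ emb) c.val = Multiset.map a (Multiset.map emb c.val)
  rw [Multiset.map_map]

lemma dotProd_sum_comm {n : ℕ} (T : TwoMulAlg R A) {σ : Fin n → Type*} [∀ i, Fintype (σ i)]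
    (g : ∀ i, σ i → A) :
    T.dotProd Finset.univ (fun i => ∑ ν : σ i, g i ν)
      = ∑ p : (∀ i, σ i), T.dotProd Finset.univ (fun i => g i (p i)) := by
  classical
  rw [dotProd_eq]
  show ofDot T (∏ i, ∑ ν : σ i, toDot T (g i ν)) = _
  rw [Finset.prod_univ_sum, Fintype.piFinset_univ]
  show (∑ p : (∀ i, σ i), ∏ i, toDot T (g i (p i))) = _
  apply Finset.sum_congr rfl
  intro p _
  exact (dotProd_eq T _ _).symm

end AuxMC

section AuxGlue
variable {ι : Type*} [Fintype ι] [DecidableEq ι] {n : ℕ}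

/-- Glue a family of partitions of the fibers into a partition of the whole set. -/
def gluePart (part : ι → Fin n)
    (p : ∀ i, Finpartition (Finset.univ.filter fun x => part x = i)) :
    Finpartition (Finset.univ : Finset ι) where
  parts := Finset.univ.biUnion fun i => (p i).parts
  supIndep := by
    rw [Finset.supIndep_iff_pairwiseDisjoint]
    intro c hc d hd hcd
    obtain ⟨i, -, hci⟩ := Finset.mem_biUnion.mp (Finset.mem_coe.mp hc)
    obtain ⟨j, -, hdj⟩ := Finset.mem_biUnion.mp (Finset.mem_coe.mp hd)
    by_cases hij : i = j
    · subst hij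
      exact (p i).disjoint hci hdj hcd
    · have hci' := (p i).le hci
      have hdj' := (p j).le hdj
      simp only [Function.onFun, id]
      rw [Finset.disjoint_left]
      intro x hxc hxd
      have h1 := (Finset.mem_filter.mp (hci' hxc)).2
      have h2 := (Finset.mem_filter.mp (hdj' hxd)).2
      exact hij (h1 ▸ h2 ▸ rfl)
  sup_parts := by
    rw [Finset.eq_univ_iff_forall]
    intro x
    have hx : x ∈ Finset.univ.filter fun y => part y = part x := by simp
    rw [← (p (part x)).sup_parts, Finset.mem_sup] at hx
    obtain ⟨c, hc, hxc⟩ := hx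
    rw [Finset.mem_sup]
    exact ⟨c, Finset.mem_biUnion.mpr ⟨part x, Finset.mem_univ _, hc⟩, hxc⟩
  bot_notMem := by
    intro h
    obtain ⟨i, -, hi⟩ := Finset.mem_biUnion.mp h
    exact (p i).bot_notMem hi

/-- Split a "non-mixing" partition of the whole set into partitions of the fibers. -/
def splitPart (part : ι → Fin n) (ν : Finpartition (Finset.univ : Finset ι))
    (hν : ∀ c ∈ ν.parts, ∃ i, c ⊆ Finset.univ.filter fun x => part x = i) (i : Fin n) :
    Finpartition (Finset.univ.filter fun x => part x = i) where
  parts := ν.parts.filter (· ⊆ Finset.univ.filter fun x => part x = i)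
  supIndep := by
    rw [Finset.supIndep_iff_pairwiseDisjoint]
    intro c hc d hd hcd
    exact ν.disjoint (Finset.mem_of_mem_filter _ (Finset.mem_coe.mp hc))
      (Finset.mem_of_mem_filter _ (Finset.mem_coe.mp hd)) hcd
  sup_parts := by
    ext x
    rw [Finset.mem_sup]
    constructor
    · rintro ⟨c, hc, hxc⟩
      exact (Finset.mem_filter.mp hc).2 hxc
    · intro hx
      have hx' : x ∈ ν.parts.sup id := by
        rw [ν.sup_parts]; exact Finset.mem_univ _
      rw [Finset.mem_sup] at hx'
      obtain ⟨c, hc, hxc⟩ := hx'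
      obtain ⟨j, hj⟩ := hν c hc
      have hji : j = i := by
        have h1 := (Finset.mem_filter.mp (hj hxc)).2
        have h2 := (Finset.mem_filter.mp hx).2
        rw [← h1, ← h2]
      refine ⟨c, Finset.mem_filter.mpr ⟨hc, hji ▸ hj⟩, hxc⟩
  bot_notMem := fun h => ν.bot_notMem (Finset.mem_of_mem_filter _ h)

lemma gluePart_nonmixing (part : ι → Fin n)
    (p : ∀ i, Finpartition (Finset.univ.filter fun x => part x = i)) :
    ∀ c ∈ (gluePart part p).parts, ∃ i, c ⊆ Finset.univ.filter fun x => part x = i := by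
  intro c hc
  obtain ⟨i, -, hci⟩ := Finset.mem_biUnion.mp hc
  exact ⟨i, (p i).le hci⟩

lemma gluePart_filter (part : ι → Fin n)
    (p : ∀ i, Finpartition (Finset.univ.filter fun x => part x = i)) (i : Fin n) :
    (gluePart part p).parts.filter (· ⊆ Finset.univ.filter fun x => part x = i)
      = (p i).parts := by
  ext c
  simp only [Finset.mem_filter, gluePart, Finset.mem_biUnion, Finset.mem_univ, true_and]
  constructor
  · rintro ⟨⟨j, hcj⟩, hci⟩
    obtain ⟨x, hx⟩ := (p j).nonempty_of_mem_parts hcj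
    have h1 := (Finset.mem_filter.mp ((p j).le hcj hx)).2
    have h2 := (Finset.mem_filter.mp (hci hx)).2
    have : j = i := by rw [← h1, ← h2]
    exact this ▸ hcj
  · intro hc
    exact ⟨⟨i, hc⟩, (p i).le hc⟩

lemma splitPart_glue (part : ι → Fin n)
    (p : ∀ i, Finpartition (Finset.univ.filter fun x => part x = i)) :
    splitPart part (gluePart part p) (gluePart_nonmixing part p) = p := by
  funext i
  apply Finpartition.ext
  exact gluePart_filter part p i

lemma glue_splitPart (part : ι → Fin n) (ν : Finpartition (Finset.univ : Finset ι))
    (hν : ∀ c ∈ ν.parts, ∃ i, c ⊆ Finset.univ.filter fun x => part x = i) :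
    gluePart part (splitPart part ν hν) = ν := by
  apply Finpartition.ext
  ext c
  simp only [gluePart, splitPart, Finset.mem_biUnion, Finset.mem_univ, true_and,
    Finset.mem_filter]
  constructor
  · rintro ⟨i, hc, -⟩
    exact hc
  · intro hc
    obtain ⟨i, hi⟩ := hν c hc
    exact ⟨i, hc, hi⟩

end AuxGlue

section Statements

variable {R : Type*} {A : Type*} [CommRing R] [AddCommGroup A] [Module R A]
variable {ι : Type*} [Fintype ι] [DecidableEq ι] {n : ℕ}

theorem stmt8 (T : TwoMulAlg R A) (k : Multiset A → A) (hk : IsCumulant T k)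
    (part : ι → Fin n) (a : ι → A) :
    T.dotProd (Finset.univ : Finset (Fin n))
        (fun i => T.starProd (Finset.univ.filter fun x => part x = i) a) =
      T.starProd (Finset.univ : Finset (Fin n))
        (fun i => T.starProd (Finset.univ.filter fun x => part x = i) a) -
      ∑ᶠ ν ∈ {ν : Finpartition (Finset.univ : Finset ι) |
          IsMixingPartition Finset.univ ν part},
        T.dotProd ν.parts fun c => k (Multiset.map a c.val) := by
  classical
  set κf : Finset ι → A := fun c => k (Multiset.map a c.val) with hκf
  have hset : {ν : Finpartition (Finset.univ : Finset ι) | IsMixingPartition Finset.univ ν part}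
      = ↑(Finset.univ.filter fun ν : Finpartition (Finset.univ : Finset ι) =>
          IsMixingPartition Finset.univ ν part) := by
    ext ν; simp
  rw [hset, finsum_mem_coe_finset]
  have hstar : T.starProd (Finset.univ : Finset (Fin n))
      (fun i => T.starProd (Finset.univ.filter fun x => part x = i) a)
      = T.starProd (Finset.univ : Finset ι) a := by
    rw [starProd_eq (s := (Finset.univ : Finset (Fin n)))]
    show ofDot T.swap
      (∏ i, ∏ x ∈ Finset.univ.filter fun x => part x = i, toDot T.swap (a x)) = _
    rw [Finset.prod_fiberwise]
    exact (starProd_eq T _ _).symm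
  have hall : T.starProd (Finset.univ : Finset ι) a
      = ∑ ν ∈ (Finset.univ : Finset (Finpartition (Finset.univ : Finset ι))),
          T.dotProd ν.parts κf := mc_finset T k hk _ a
  have hval : ∀ p : ∀ i : Fin n, Finpartition (Finset.univ.filter fun x => part x = i),
      T.dotProd Finset.univ (fun i => T.dotProd (p i).parts κf)
        = T.dotProd (gluePart part p).parts κf := by
    intro p
    rw [dotProd_eq (s := (gluePart part p).parts)]
    show _ = ofDot T (∏ c ∈ Finset.univ.biUnion (fun i => (p i).parts), toDot T (κf c))
    rw [Finset.prod_biUnion ?hd]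
    case hd =>
      intro i _ j _ hij
      rw [Function.onFun, Finset.disjoint_left]
      intro c hci hcj
      obtain ⟨x, hx⟩ := (p i).nonempty_of_mem_parts hci
      have h1 := (Finset.mem_filter.mp ((p i).le hci hx)).2
      have h2 := (Finset.mem_filter.mp ((p j).le hcj hx)).2
      exact hij (h1 ▸ h2 ▸ rfl)
    rw [dotProd_eq]
    apply congrArg
    apply Finset.prod_congr rfl
    intro i _
    exact congrArg (toDot T) (dotProd_eq T _ _)
  have hmc : (fun i => T.starProd (Finset.univ.filter fun x => part x = i) a)
      = fun i : Fin n => ∑ ν : Finpartition (Finset.univ.filter fun x => part x = i),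
          T.dotProd ν.parts κf :=
    funext fun i => mc_finset T k hk _ a
  have main : T.dotProd (Finset.univ : Finset (Fin n))
      (fun i => T.starProd (Finset.univ.filter fun x => part x = i) a)
      = ∑ ν ∈ Finset.univ.filter (fun ν : Finpartition (Finset.univ : Finset ι) =>
          ¬ IsMixingPartition Finset.univ ν part), T.dotProd ν.parts κf := by
    rw [hmc, dotProd_sum_comm]
    apply Finset.sum_bij (fun p _ => gluePart part p)
    · intro p _
      rw [Finset.mem_filter]
      refine ⟨Finset.mem_univ _, ?_⟩
      rintro ⟨c, hc, hcall⟩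
      obtain ⟨i, hi⟩ := gluePart_nonmixing part p c hc
      exact hcall i hi
    · intro p _ q _ h
      funext i
      apply Finpartition.ext
      rw [← gluePart_filter part p i, ← gluePart_filter part q i, h]
    · intro ν hν
      rw [Finset.mem_filter] at hν
      have hν' : ∀ c ∈ ν.parts, ∃ i, c ⊆ Finset.univ.filter fun x => part x = i := by
        have h2 := hν.2
        unfold IsMixingPartition at h2
        push_neg at h2
        exact h2
      exact ⟨splitPart part ν hν', Finset.mem_univ _, glue_splitPart part ν hν'⟩
    · intro p _
      exact hval p
  rw [main, hstar, hall,
    ← Finset.sum_filter_add_sum_filter_not Finset.univ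
      (fun ν : Finpartition (Finset.univ : Finset ι) => IsMixingPartition Finset.univ ν part)
      (fun ν => T.dotProd ν.parts κf),
    add_sub_cancel_left]


end Statements
end
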